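/- arXiv:1910.06508 — 7 statements merged into one kernel-verified Lean document; each statement's English description precedes it below -/
import Mathlib

section
/- Let (Ω, ℱ, P) be a probability space, let ρ ≥ 0 and G be real random variables with Gρ square-integrable and G·E[ρ|𝒢] square-integrable, and let 𝒢 ⊆ ℋ be sub-σ-algebras of ℱ such that G is ℋ-measurable and E[ρ | ℋ] = E[ρ | 𝒢] almost surely (i.e., ρ is conditionally mean-independent of G given 𝒢). Then E[G · E[ρ | 𝒢]] = E[G ρ] and Var(G · E[ρ | 𝒢]) ≤ Var(G ρ). -/
/-!
Pulling the `ℋ`-measurable factor `G` out of `E[Gρ | ℋ]` and then replacing `E[ρ | ℋ]` by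
`E[ρ | 𝒢]` shows that `G·E[ρ | 𝒢] = E[Gρ | ℋ]` almost surely. Conditional expectation preserves
the mean, and by the law of total variance it lowers the variance by `E[Var(Gρ | ℋ)] ≥ 0`.
-/

open MeasureTheory ProbabilityTheory

lemma ProbabilityTheory.variance_condExp_le {Ω : Type*} {m m₀ : MeasurableSpace Ω}
    {μ : Measure Ω} [IsProbabilityMeasure μ] {X : Ω → ℝ} (hm : m ≤ m₀) (hX : MemLp X 2 μ) :
    Var[μ[X | m]; μ] ≤ Var[X; μ] := by
  rw [← integral_condVar_add_variance_condExp hm hX, le_add_iff_nonneg_left]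
  exact integral_nonneg_of_ae <| condExp_nonneg <| .of_forall fun ω => sq_nonneg _

lemma MeasureTheory.mul_condExp_ae_eq_condExp_mul {Ω : Type*} {m₀ : MeasurableSpace Ω}
    {μ : Measure Ω} {𝒢 ℋ : MeasurableSpace Ω} {ρ G : Ω → ℝ}
    (hG : StronglyMeasurable[ℋ] G) (hGρ : Integrable (G * ρ) μ) (hρ : Integrable ρ μ)
    (h_mean_indep : μ[ρ | ℋ] =ᵐ[μ] μ[ρ | 𝒢]) :
    G * μ[ρ | 𝒢] =ᵐ[μ] μ[G * ρ | ℋ] := by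
  filter_upwards [condExp_mul_of_stronglyMeasurable_left hG hGρ hρ, h_mean_indep]
    with ω h_pull h_eq
  simp only [Pi.mul_apply] at h_pull ⊢
  rw [h_pull, h_eq]

theorem conditional_monte_carlo_variance_reduction_general
    {Ω : Type*} {m0 : MeasurableSpace Ω} (P : Measure Ω) [IsProbabilityMeasure P]
    (𝒢 ℋ : MeasurableSpace Ω) (hℋ : ℋ ≤ m0)
    (ρ G : Ω → ℝ)
    (hρ_int : Integrable ρ P)
    (hG_meas : Measurable[ℋ] G)
    (hGρ_sq : MemLp (fun ω => G ω * ρ ω) 2 P)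
    (h_mean_indep : P[ρ|ℋ] =ᵐ[P] P[ρ|𝒢]) :
    (∫ ω, G ω * (P[ρ|𝒢]) ω ∂P) = (∫ ω, G ω * ρ ω ∂P) ∧
    ((∫ ω, (G ω * (P[ρ|𝒢]) ω) ^ 2 ∂P) - (∫ ω, G ω * (P[ρ|𝒢]) ω ∂P) ^ 2)
      ≤ ((∫ ω, (G ω * ρ ω) ^ 2 ∂P) - (∫ ω, G ω * ρ ω ∂P) ^ 2) := by
  set Y : Ω → ℝ := fun ω => G ω * ρ ω
  have hX : G * P[ρ|𝒢] =ᵐ[P] P[Y|ℋ] := mul_condExp_ae_eq_condExp_mul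
    hG_meas.stronglyMeasurable (hGρ_sq.integrable one_le_two) hρ_int h_mean_indep
  have hmean : ∫ ω, G ω * (P[ρ|𝒢]) ω ∂P = ∫ ω, Y ω ∂P :=
    (integral_congr_ae hX).trans (integral_condExp hℋ)
  have hsq : ∫ ω, (G ω * (P[ρ|𝒢]) ω) ^ 2 ∂P = ∫ ω, (P[Y|ℋ] ω) ^ 2 ∂P :=
    integral_congr_ae (hX.fun_comp (· ^ 2))
  have hvar := variance_condExp_le hℋ hGρ_sq
  rw [variance_eq_sub hGρ_sq, variance_eq_sub (hGρ_sq.condExp one_le_two),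
    integral_condExp hℋ] at hvar
  refine ⟨hmean, ?_⟩
  rwa [hmean, hsq]

/-- Conditional Monte Carlo variance reduction. If `ρ ≥ 0`, `Gρ` and
`G·E[ρ|𝒢]` are square-integrable, `𝒢 ⊆ ℋ` are sub-σ-algebras of `ℱ`, `G` is
`ℋ`-measurable and `E[ρ|ℋ] = E[ρ|𝒢]` a.s., then `E[G·E[ρ|𝒢]] = E[Gρ]` and
`Var(G·E[ρ|𝒢]) ≤ Var(Gρ)`, where `Var(X) := E[X²] − (E[X])²`. -/
theorem conditional_monte_carlo_variance_reduction
    {Ω : Type*} {m0 : MeasurableSpace Ω} (P : Measure Ω) [IsProbabilityMeasure P]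
    (𝒢 ℋ : MeasurableSpace Ω) (h𝒢ℋ : 𝒢 ≤ ℋ) (hℋ : ℋ ≤ m0)
    (ρ G : Ω → ℝ)
    (hρ_nonneg : ∀ ω, 0 ≤ ρ ω) (hρ_int : Integrable ρ P)
    (hG_meas : Measurable[ℋ] G)
    (hGρ_sq : MemLp (fun ω => G ω * ρ ω) 2 P)
    (hGcond_sq : MemLp (fun ω => G ω * (P[ρ|𝒢]) ω) 2 P)
    (h_mean_indep : P[ρ|ℋ] =ᵐ[P] P[ρ|𝒢]) :
    (∫ ω, G ω * (P[ρ|𝒢]) ω ∂P) = (∫ ω, G ω * ρ ω ∂P) ∧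
    ((∫ ω, (G ω * (P[ρ|𝒢]) ω) ^ 2 ∂P) - (∫ ω, G ω * (P[ρ|𝒢]) ω ∂P) ^ 2)
      ≤ ((∫ ω, (G ω * ρ ω) ^ 2 ∂P) - (∫ ω, G ω * ρ ω ∂P) ^ 2) :=
  conditional_monte_carlo_variance_reduction_general P 𝒢 ℋ hℋ ρ G hρ_int hG_meas hGρ_sq h_mean_indep
end

section
/- In the likelihood-ratio filtration setup, suppose that for each t = 1, …, T there is a sub-σ-algebra 𝒢_t of ℱ such that E[ρ_{1:t} | 𝒢_t ∨ σ(r_t)] = E[ρ_{1:t} | 𝒢_t] almost surely (r_t is conditionally mean-independent of ρ_{1:t} given 𝒢_t). Then E[ ρ_{1:T} ∑_{t=1}^T γ^{t−1} r_t ] = E[ ∑_{t=1}^T γ^{t−1} r_t · E[ρ_{1:t} | 𝒢_t] ]; in particular every extended conditional importance-sampling estimator ∑_{t=1}^T γ^{t−1} r_t E[ρ_{1:t}|𝒢_t] has the same expectation as the crude importance-sampling estimator. -/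
open MeasureTheory Finset

/-!
For each `t`, the product `ρ_{1:s}` is an `(ℱ_s)`-martingale on `t ≤ s ≤ T`, so conditioning on
`ℱ_t`, with respect to which the bounded reward `r_t` is measurable, gives
`E[r_t ρ_{1:T}] = E[r_t ρ_{1:t}]`. Conditioning next on `𝒢_t ∨ σ(r_t)`, for which `r_t` is again
measurable, and using mean independence gives `E[r_t ρ_{1:t}] = E[r_t E[ρ_{1:t} | 𝒢_t]]`.
Summing these identities with the weights `γ^{t-1}` is the theorem.
-/

section ConditionalExpectation

variable {Ω : Type*} {m m0 : MeasurableSpace Ω} {μ : Measure Ω}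

theorem integral_sum_const_mul_mul_of_bound {ι : Type*} (s : Finset ι) (w : ι → ℝ)
    {f g : ι → Ω → ℝ} (hf : ∀ i ∈ s, AEStronglyMeasurable (f i) μ) {c : ℝ}
    (hf_bound : ∀ i ∈ s, ∀ᵐ ω ∂μ, ‖f i ω‖ ≤ c) (hg : ∀ i ∈ s, Integrable (g i) μ) :
    ∫ ω, ∑ i ∈ s, w i * (f i ω * g i ω) ∂μ = ∑ i ∈ s, w i * ∫ ω, f i ω * g i ω ∂μ := by
  rw [integral_finsetSum _ fun i hi => ((hg i hi).bdd_mul (hf i hi) (hf_bound i hi)).const_mul _]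
  exact sum_congr rfl fun i _ => integral_const_mul _ _

theorem integral_mul_condExp_of_bound [IsFiniteMeasure μ] (hm : m ≤ m0) {f g : Ω → ℝ}
    (hf : StronglyMeasurable[m] f) (hg : Integrable g μ) {c : ℝ}
    (hf_bound : ∀ᵐ ω ∂μ, ‖f ω‖ ≤ c) :
    ∫ ω, f ω * μ[g | m] ω ∂μ = ∫ ω, f ω * g ω ∂μ :=
  (integral_congr_ae (condExp_stronglyMeasurable_mul_of_bound hm hf hg c hf_bound).symm).trans
    (integral_condExp hm)

theorem condExp_mul_eq_left_of_condExp_eq_one {f g : Ω → ℝ} (hf : StronglyMeasurable[m] f)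
    (hfg : Integrable (f * g) μ) (hg : Integrable g μ) (hg_one : μ[g | m] =ᵐ[μ] 1) :
    μ[f * g | m] =ᵐ[μ] f := by
  filter_upwards [condExp_mul_of_stronglyMeasurable_left hf hfg hg, hg_one] with ω hfg hg
  simp [hfg, hg]

theorem condExp_eq_of_condExp_succ_eq [IsFiniteMeasure μ] {ℱ : Filtration ℕ m0}
    {X : ℕ → Ω → ℝ} {a b : ℕ} (hab : a ≤ b) (hXa : StronglyMeasurable[ℱ a] (X a))
    (hXa_int : Integrable (X a) μ)
    (hstep : ∀ n, a ≤ n → n < b → μ[X (n + 1) | ℱ n] =ᵐ[μ] X n) :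
    μ[X b | ℱ a] =ᵐ[μ] X a := by
  induction b, hab using Nat.le_induction with
  | base => rw [condExp_of_stronglyMeasurable (ℱ.le a) hXa hXa_int]
  | succ n han ih =>
    calc μ[X (n + 1) | ℱ a]
        =ᵐ[μ] μ[μ[X (n + 1) | ℱ n] | ℱ a] := (condExp_condExp_of_le (ℱ.mono han) (ℱ.le n)).symm
      _ =ᵐ[μ] μ[X n | ℱ a] := condExp_congr_ae (hstep n han n.lt_succ_self)
      _ =ᵐ[μ] X a := ih fun k hak hkn => hstep k hak (hkn.trans n.lt_succ_self)

theorem integral_mul_condExp_of_condExp_sup_comap_eq [IsFiniteMeasure μ] {𝒢 : MeasurableSpace Ω}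
    (h𝒢 : 𝒢 ≤ m0) {f g : Ω → ℝ} (hf : Measurable[m0] f) (hg : Integrable g μ) {c : ℝ}
    (hf_bound : ∀ᵐ ω ∂μ, ‖f ω‖ ≤ c)
    (h_mean_indep : μ[g | 𝒢 ⊔ MeasurableSpace.comap f (borel ℝ)] =ᵐ[μ] μ[g | 𝒢]) :
    ∫ ω, f ω * μ[g | 𝒢] ω ∂μ = ∫ ω, f ω * g ω ∂μ := by
  calc ∫ ω, f ω * μ[g | 𝒢] ω ∂μ
      = ∫ ω, f ω * μ[g | 𝒢 ⊔ MeasurableSpace.comap f (borel ℝ)] ω ∂μ := by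
        refine integral_congr_ae ?_
        filter_upwards [h_mean_indep] with ω hω
        rw [hω]
    _ = ∫ ω, f ω * g ω ∂μ :=
      integral_mul_condExp_of_bound (sup_le h𝒢 hf.comap_le)
        (Measurable.of_comap_le le_sup_right).stronglyMeasurable hg hf_bound

end ConditionalExpectation

section CumulativeRatio

variable {Ω : Type*} {m0 : MeasurableSpace Ω}

/-- The cumulative likelihood ratio `ρ_{1:t}`; `ρ_{1:0} = 1`. -/
def cumulativeRatio (ρ : ℕ → Ω → ℝ) (t : ℕ) : Ω → ℝ := fun ω => ∏ k ∈ Icc 1 t, ρ k ω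

theorem cumulativeRatio_succ (ρ : ℕ → Ω → ℝ) (t : ℕ) :
    cumulativeRatio ρ (t + 1) = cumulativeRatio ρ t * ρ (t + 1) := by
  funext ω
  exact prod_Icc_succ_top (Nat.le_add_left 1 t) _

variable {P : Measure Ω} {ℱ : Filtration ℕ m0} {ρ : ℕ → Ω → ℝ} {T : ℕ}

theorem measurable_cumulativeRatio {t : ℕ}
    (hρ_meas : ∀ k, 1 ≤ k → k ≤ t → Measurable[ℱ k] (ρ k)) :
    Measurable[ℱ t] (cumulativeRatio ρ t) :=
  Finset.measurable_prod _ fun k hk =>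
    (hρ_meas k (mem_Icc.mp hk).1 (mem_Icc.mp hk).2).mono (ℱ.mono (mem_Icc.mp hk).2) le_rfl

theorem condExp_cumulativeRatio_succ {t : ℕ}
    (hρ_meas : ∀ k, 1 ≤ k → k ≤ t → Measurable[ℱ k] (ρ k))
    (hρ_int : Integrable (ρ (t + 1)) P)
    (hρ_cond : P[ρ (t + 1) | ℱ t] =ᵐ[P] fun _ => (1 : ℝ))
    (hprod_int : Integrable (cumulativeRatio ρ (t + 1)) P) :
    P[cumulativeRatio ρ (t + 1) | ℱ t] =ᵐ[P] cumulativeRatio ρ t := by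
  rw [cumulativeRatio_succ] at hprod_int ⊢
  exact condExp_mul_eq_left_of_condExp_eq_one
    (measurable_cumulativeRatio hρ_meas).stronglyMeasurable hprod_int hρ_int hρ_cond

theorem condExp_cumulativeRatio [IsFiniteMeasure P]
    (hρ_meas : ∀ t, 1 ≤ t → t ≤ T → Measurable[ℱ t] (ρ t))
    (hρ_int : ∀ t, 1 ≤ t → t ≤ T → Integrable (ρ t) P)
    (hρ_cond : ∀ t, 1 ≤ t → t ≤ T → P[ρ t | ℱ (t - 1)] =ᵐ[P] fun _ => (1 : ℝ))
    (hprod_int : ∀ t, 1 ≤ t → t ≤ T → Integrable (cumulativeRatio ρ t) P)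
    {t : ℕ} (ht₁ : 1 ≤ t) (htT : t ≤ T) :
    P[cumulativeRatio ρ T | ℱ t] =ᵐ[P] cumulativeRatio ρ t := by
  refine condExp_eq_of_condExp_succ_eq htT
    (measurable_cumulativeRatio fun k hk₁ hkt => hρ_meas k hk₁ (hkt.trans htT)).stronglyMeasurable
    (hprod_int t ht₁ htT) fun n htn hnT => ?_
  refine condExp_cumulativeRatio_succ (fun k hk₁ hkn => hρ_meas k hk₁ (by omega))
    (hρ_int (n + 1) (by omega) hnT) ?_ (hprod_int (n + 1) (by omega) hnT)
  simpa using hρ_cond (n + 1) (by omega) hnT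

theorem integral_mul_cumulativeRatio_eq_of_le [IsFiniteMeasure P]
    (hρ_meas : ∀ t, 1 ≤ t → t ≤ T → Measurable[ℱ t] (ρ t))
    (hρ_int : ∀ t, 1 ≤ t → t ≤ T → Integrable (ρ t) P)
    (hρ_cond : ∀ t, 1 ≤ t → t ≤ T → P[ρ t | ℱ (t - 1)] =ᵐ[P] fun _ => (1 : ℝ))
    (hprod_int : ∀ t, 1 ≤ t → t ≤ T → Integrable (cumulativeRatio ρ t) P)
    {t : ℕ} (ht₁ : 1 ≤ t) (htT : t ≤ T) {f : Ω → ℝ} (hf : Measurable[ℱ t] f) {c : ℝ}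
    (hf_bound : ∀ᵐ ω ∂P, ‖f ω‖ ≤ c) :
    ∫ ω, f ω * cumulativeRatio ρ T ω ∂P = ∫ ω, f ω * cumulativeRatio ρ t ω ∂P := by
  calc ∫ ω, f ω * cumulativeRatio ρ T ω ∂P
      = ∫ ω, f ω * P[cumulativeRatio ρ T | ℱ t] ω ∂P :=
        (integral_mul_condExp_of_bound (ℱ.le t) hf.stronglyMeasurable
          (hprod_int T (ht₁.trans htT) le_rfl) hf_bound).symm
    _ = ∫ ω, f ω * cumulativeRatio ρ t ω ∂P := by
        refine integral_congr_ae ?_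
        filter_upwards [condExp_cumulativeRatio hρ_meas hρ_int hρ_cond hprod_int ht₁ htT]
          with ω hω
        rw [hω]

end CumulativeRatio

theorem extended_conditional_is_unbiased_general
    {Ω : Type*} {m0 : MeasurableSpace Ω} (P : Measure Ω) [IsProbabilityMeasure P]
    (T : ℕ) (ℱ : MeasureTheory.Filtration ℕ m0)
    (γ : ℝ)
    (ρ : ℕ → Ω → ℝ)
    (hρ_meas : ∀ t, 1 ≤ t → t ≤ T → Measurable[ℱ t] (ρ t))
    (hρ_int : ∀ t, 1 ≤ t → t ≤ T → Integrable (ρ t) P)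
    (hρ_cond : ∀ t, 1 ≤ t → t ≤ T → P[ρ t | ℱ (t - 1)] =ᵐ[P] fun _ => (1 : ℝ))
    (ρprod : ℕ → Ω → ℝ)
    (hρprod : ∀ t ω, ρprod t ω = ∏ k ∈ Icc 1 t, ρ k ω)
    (r : ℕ → Ω → ℝ)
    (hr_meas : ∀ t, 1 ≤ t → t ≤ T → Measurable[ℱ t] (r t))
    (hr_range : ∀ t ω, r t ω ∈ Set.Icc (0 : ℝ) 1)
    (hρprod_sq : ∀ t, 1 ≤ t → t ≤ T → MemLp (ρprod t) 2 P)
    (𝒢 : ℕ → MeasurableSpace Ω)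
    (h𝒢 : ∀ t, 1 ≤ t → t ≤ T → 𝒢 t ≤ m0)
    (h_mean_indep : ∀ t, 1 ≤ t → t ≤ T →
      P[ρprod t | 𝒢 t ⊔ MeasurableSpace.comap (r t) (borel ℝ)]
        =ᵐ[P] P[ρprod t | 𝒢 t]) :
    (∫ ω, ρprod T ω * ∑ t ∈ Icc 1 T, γ ^ (t - 1) * r t ω ∂P)
      = ∫ ω, ∑ t ∈ Icc 1 T, γ ^ (t - 1) * r t ω * (P[ρprod t | 𝒢 t]) ω ∂P := by
  obtain rfl : ρprod = cumulativeRatio ρ := funext fun t => funext (hρprod t)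
  have hr t (ht : t ∈ Icc 1 T) : Measurable (r t) :=
    (hr_meas t (mem_Icc.mp ht).1 (mem_Icc.mp ht).2).mono (ℱ.le t) le_rfl
  have hr_bound t : ∀ᵐ ω ∂P, ‖r t ω‖ ≤ 1 := .of_forall fun ω =>
    abs_le.mpr ⟨(neg_nonpos.mpr zero_le_one).trans (hr_range t ω).1, (hr_range t ω).2⟩
  have hprod_int t (ht₁ : 1 ≤ t) (htT : t ≤ T) : Integrable (cumulativeRatio ρ t) P :=
    (hρprod_sq t ht₁ htT).integrable one_le_two
  have key : ∀ t ∈ Icc 1 T, ∫ ω, r t ω * cumulativeRatio ρ T ω ∂P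
      = ∫ ω, r t ω * P[cumulativeRatio ρ t | 𝒢 t] ω ∂P := fun t ht => by
    obtain ⟨ht₁, htT⟩ := mem_Icc.mp ht
    rw [integral_mul_cumulativeRatio_eq_of_le hρ_meas hρ_int hρ_cond hprod_int ht₁ htT
      (hr_meas t ht₁ htT) (hr_bound t),
      integral_mul_condExp_of_condExp_sup_comap_eq (h𝒢 t ht₁ htT) (hr t ht) (hprod_int t ht₁ htT)
        (hr_bound t) (h_mean_indep t ht₁ htT)]
  have hr_aesm t (ht : t ∈ Icc 1 T) : AEStronglyMeasurable (r t) P := (hr t ht).aestronglyMeasurable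
  calc ∫ ω, cumulativeRatio ρ T ω * ∑ t ∈ Icc 1 T, γ ^ (t - 1) * r t ω ∂P
      = ∫ ω, ∑ t ∈ Icc 1 T, γ ^ (t - 1) * (r t ω * cumulativeRatio ρ T ω) ∂P := by
        congr 1 with ω
        rw [mul_sum]
        exact sum_congr rfl fun t _ => by ring
    _ = ∑ t ∈ Icc 1 T, γ ^ (t - 1) * ∫ ω, r t ω * P[cumulativeRatio ρ t | 𝒢 t] ω ∂P := by
        rw [integral_sum_const_mul_mul_of_bound _ _ hr_aesm (fun t _ => hr_bound t) fun t ht =>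
          hprod_int T ((mem_Icc.mp ht).1.trans (mem_Icc.mp ht).2) le_rfl]
        exact sum_congr rfl fun t ht => by rw [key t ht]
    _ = ∫ ω, ∑ t ∈ Icc 1 T, γ ^ (t - 1) * r t ω * P[cumulativeRatio ρ t | 𝒢 t] ω ∂P := by
        simp_rw [mul_assoc]
        exact (integral_sum_const_mul_mul_of_bound _ _ hr_aesm (fun t _ => hr_bound t)
          fun _ _ => integrable_condExp).symm

/-- In the likelihood-ratio filtration setup, if for each `t` there is a
sub-σ-algebra `𝒢_t` with `E[ρ_{1:t} | 𝒢_t ∨ σ(r_t)] = E[ρ_{1:t} | 𝒢_t]` a.s., then the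
crude IS estimator and every extended conditional IS estimator
`∑_t γ^{t−1} r_t E[ρ_{1:t}|𝒢_t]` have the same expectation. -/
theorem extended_conditional_is_unbiased
    {Ω : Type*} {m0 : MeasurableSpace Ω} (P : Measure Ω) [IsProbabilityMeasure P]
    (T : ℕ) (ℱ : MeasureTheory.Filtration ℕ m0)
    (γ : ℝ) (hγ : γ ∈ Set.Ioc (0 : ℝ) 1)
    (ρ : ℕ → Ω → ℝ)
    (hρ_meas : ∀ t, 1 ≤ t → t ≤ T → Measurable[ℱ t] (ρ t))
    (hρ_nonneg : ∀ t ω, 0 ≤ ρ t ω)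
    (hρ_int : ∀ t, 1 ≤ t → t ≤ T → Integrable (ρ t) P)
    (hρ_cond : ∀ t, 1 ≤ t → t ≤ T → P[ρ t | ℱ (t - 1)] =ᵐ[P] fun _ => (1 : ℝ))
    (ρprod : ℕ → Ω → ℝ)
    (hρprod : ∀ t ω, ρprod t ω = ∏ k ∈ Icc 1 t, ρ k ω)
    (r : ℕ → Ω → ℝ)
    (hr_meas : ∀ t, 1 ≤ t → t ≤ T → Measurable[ℱ t] (r t))
    (hr_range : ∀ t ω, r t ω ∈ Set.Icc (0 : ℝ) 1)
    (hρprod_sq : ∀ t, 1 ≤ t → t ≤ T → MemLp (ρprod t) 2 P)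
    (𝒢 : ℕ → MeasurableSpace Ω)
    (h𝒢 : ∀ t, 1 ≤ t → t ≤ T → 𝒢 t ≤ m0)
    (h_mean_indep : ∀ t, 1 ≤ t → t ≤ T →
      P[ρprod t | 𝒢 t ⊔ MeasurableSpace.comap (r t) (borel ℝ)]
        =ᵐ[P] P[ρprod t | 𝒢 t]) :
    (∫ ω, ρprod T ω * ∑ t ∈ Icc 1 T, γ ^ (t - 1) * r t ω ∂P)
      = ∫ ω, ∑ t ∈ Icc 1 T, γ ^ (t - 1) * r t ω * (P[ρprod t | 𝒢 t]) ω ∂P :=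
  extended_conditional_is_unbiased_general P T ℱ γ ρ hρ_meas hρ_int hρ_cond ρprod hρprod r hr_meas
    hr_range hρprod_sq 𝒢 h𝒢 h_mean_indep
end

section
/- In the likelihood-ratio filtration setup, suppose that for all 1 ≤ t < k ≤ T one has, almost surely, E[ r_k (ρ_{t+1:T})² | ℱ_t ] ≥ E[ r_k ρ_{t+1:T} | ℱ_t ], where ρ_{t+1:T} := ∏_{j=t+1}^T ρ_j (since E[ρ_{t+1:T} | ℱ_t] = 1, this says that conditionally on ℱ_t the variables ρ_{t+1:T} and r_k ρ_{t+1:T} are nonnegatively correlated). Then Var( ∑_{t=1}^T γ^{t−1} ρ_{1:t} r_t ) ≤ Var( ρ_{1:T} ∑_{t=1}^T γ^{t−1} r_t ); that is, the per-decision importance-sampling estimator has variance no larger than the crude importance-sampling estimator. -/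
/-!
Both estimators have mean `E[ρ_{1:T} ∑ γ^{t-1} r_t]`, because `t ↦ ρ_{1:t}` is a martingale:
`E[ρ_{1:b} g] = E[ρ_{1:T} g]` for every `ℱ_b`-measurable `g ≥ 0`. Expanding the second moments,
it suffices to show `E[ρ_{1:t} r_t ρ_{1:k} r_k] ≤ E[ρ_{1:T}² r_t r_k]` for `t ≤ k`. The martingale
property replaces `ρ_{1:k}` by `ρ_{1:T} = ρ_{1:t} ρ_{t+1:T}`. For `t < k`, conditioning on `ℱ_t`
and the correlation hypothesis turn `ρ_{t+1:T}` into `ρ_{t+1:T}²`; for `t = k`, the bound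
`E[ab] ≤ E[b²]` follows from `E[a²] = E[ab]` and `2ab ≤ a² + b²`.

The martingale identities are proved for lower Lebesgue integrals of nonnegative functions,
where `E[ρ_{s+1} | ℱ_s] = 1` says that `ρ_{s+1} · P` and `P` agree on `ℱ_s`. This way the tail
products `ρ_{t+1:T}` need no integrability assumption.
-/

open MeasureTheory Finset
open scoped ENNReal

section

variable {Ω : Type*} {m0 : MeasurableSpace Ω} {P : Measure Ω}

theorem lintegral_mul_ofReal_eq_of_condExp_eq_one [IsFiniteMeasure P] {m : MeasurableSpace Ω}
    (hm : m ≤ m0) {ρ : Ω → ℝ} (hρ_nonneg : 0 ≤ᵐ[P] ρ) (hρ_int : Integrable ρ P)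
    (hρ : P[ρ | m] =ᵐ[P] fun _ => 1) {g : Ω → ℝ≥0∞} (hg : Measurable[m] g) :
    ∫⁻ ω, g ω * ENNReal.ofReal (ρ ω) ∂P = ∫⁻ ω, g ω ∂P := by
  have htrim : (P.withDensity fun ω => ENNReal.ofReal (ρ ω)).trim hm = P.trim hm := by
    refine Measure.ext fun s hs => ?_
    rw [trim_measurableSet_eq hm hs, trim_measurableSet_eq hm hs, withDensity_apply _ (hm s hs),
      ← ofReal_integral_eq_lintegral_ofReal hρ_int.integrableOn (ae_restrict_of_ae hρ_nonneg),
      ← setIntegral_condExp hm hρ_int hs, setIntegral_congr_ae (hm s hs) (hρ.mono fun _ h _ => h),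
      setIntegral_const, smul_eq_mul, mul_one, measureReal_def,
      ENNReal.ofReal_toReal (measure_ne_top _ _)]
  calc ∫⁻ ω, g ω * ENNReal.ofReal (ρ ω) ∂P
      = ∫⁻ ω, g ω ∂(P.withDensity fun ω => ENNReal.ofReal (ρ ω)) := by
        rw [lintegral_withDensity_eq_lintegral_mul₀ hρ_int.1.aemeasurable.ennreal_ofReal
          (hg.mono hm le_rfl).aemeasurable]
        simp only [Pi.mul_apply, mul_comm]
    _ = ∫⁻ ω, g ω ∂P := by
        rw [← lintegral_trim hm hg, htrim, lintegral_trim hm hg]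

theorem integral_mul_le_integral_mul_of_condExp_le {m : MeasurableSpace Ω} (hm : m ≤ m0)
    [SigmaFinite (P.trim hm)] {w f g : Ω → ℝ} (hw : StronglyMeasurable[m] w)
    (hw_nonneg : 0 ≤ᵐ[P] w) (hg_nonneg : 0 ≤ᵐ[P] g) (hf : Integrable f P)
    (hwf : Integrable (w * f) P) (hwg : Integrable (w * g) P) (hfg : P[f | m] ≤ᵐ[P] P[g | m]) :
    ∫ ω, w ω * f ω ∂P ≤ ∫ ω, w ω * g ω ∂P := by
  have hpull : ∀ {u : Ω → ℝ}, Integrable u P → Integrable (w * u) P →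
      ∫ ω, w ω * u ω ∂P = ∫ ω, w ω * (P[u | m]) ω ∂P ∧
        Integrable (w * P[u | m]) P := fun hu hwu =>
    have hmul := condExp_mul_of_stronglyMeasurable_left (m := m) hw hwu hu
    ⟨(integral_condExp hm).symm.trans (integral_congr_ae hmul), integrable_condExp.congr hmul⟩
  obtain ⟨hf_eq, hwf'⟩ := hpull hf hwf
  rw [hf_eq]
  by_cases hg : Integrable g P
  · obtain ⟨hg_eq, hwg'⟩ := hpull hg hwg
    rw [hg_eq]
    refine integral_mono_ae hwf' hwg' ?_
    filter_upwards [hfg, hw_nonneg] with ω hω hwω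
    exact mul_le_mul_of_nonneg_left hω hwω
  · -- `P[g | m] = 0`, so `P[f | m] ≤ 0` and both sides compare with `0`.
    rw [condExp_of_not_integrable hg] at hfg
    calc ∫ ω, w ω * (P[f | m]) ω ∂P ≤ 0 := by
          refine integral_nonpos_of_ae ?_
          filter_upwards [hfg, hw_nonneg] with ω hω hwω
          exact mul_nonpos_of_nonneg_of_nonpos hwω hω
      _ ≤ ∫ ω, w ω * g ω ∂P := by
          refine integral_nonneg_of_ae ?_
          filter_upwards [hg_nonneg, hw_nonneg] with ω hω hwω
          exact mul_nonneg hwω hω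

theorem integral_mul_le_integral_mul_self_of_integral_mul_self_eq {a b : Ω → ℝ}
    (ha : MemLp a 2 P) (hb : MemLp b 2 P) (h : ∫ ω, a ω * a ω ∂P = ∫ ω, a ω * b ω ∂P) :
    ∫ ω, a ω * b ω ∂P ≤ ∫ ω, b ω * b ω ∂P := by
  have hamgm : ∫ ω, 2 * (a ω * b ω) ∂P ≤ ∫ ω, (a ω * a ω + b ω * b ω) ∂P :=
    integral_mono ((ha.integrable_mul hb).const_mul 2)
      ((ha.integrable_mul ha).add (hb.integrable_mul hb))
      fun ω => by nlinarith [sq_nonneg (a ω - b ω)]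
  rw [integral_const_mul, integral_add (f := fun ω => a ω * a ω) (g := fun ω => b ω * b ω)
    (ha.integrable_mul ha) (hb.integrable_mul hb)] at hamgm
  linarith

theorem integral_sq_sum_sub_sq_integral_sum_le [IsFiniteMeasure P] {ι : Type*} (s : Finset ι)
    (c : ι → ℝ) (hc : ∀ i ∈ s, 0 ≤ c i) {A B : ι → Ω → ℝ} (hA : ∀ i ∈ s, MemLp (A i) 2 P)
    (hB : ∀ i ∈ s, MemLp (B i) 2 P) (hmean : ∀ i ∈ s, ∫ ω, A i ω ∂P = ∫ ω, B i ω ∂P)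
    (hcov : ∀ i ∈ s, ∀ j ∈ s, ∫ ω, A i ω * A j ω ∂P ≤ ∫ ω, B i ω * B j ω ∂P) :
    (∫ ω, (∑ i ∈ s, c i * A i ω) ^ 2 ∂P) - (∫ ω, ∑ i ∈ s, c i * A i ω ∂P) ^ 2
      ≤ (∫ ω, (∑ i ∈ s, c i * B i ω) ^ 2 ∂P) - (∫ ω, ∑ i ∈ s, c i * B i ω ∂P) ^ 2 := by
  have hmoment1 : ∀ X : ι → Ω → ℝ, (∀ i ∈ s, MemLp (X i) 2 P) →
      ∫ ω, ∑ i ∈ s, c i * X i ω ∂P = ∑ i ∈ s, c i * ∫ ω, X i ω ∂P := fun X hX => by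
    rw [integral_finsetSum _ fun i hi => ((hX i hi).integrable one_le_two).const_mul _]
    simp_rw [integral_const_mul]
  have hmoment2 : ∀ X : ι → Ω → ℝ, (∀ i ∈ s, MemLp (X i) 2 P) →
      ∫ ω, (∑ i ∈ s, c i * X i ω) ^ 2 ∂P
        = ∑ i ∈ s, ∑ j ∈ s, c i * c j * ∫ ω, X i ω * X j ω ∂P := fun X hX => by
    have hint : ∀ i ∈ s, ∀ j ∈ s, Integrable (fun ω => c i * c j * (X i ω * X j ω)) P :=
      fun i hi j hj => ((hX i hi).integrable_mul (hX j hj)).const_mul _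
    simp_rw [sq, sum_mul_sum, mul_mul_mul_comm]
    rw [integral_finsetSum _ fun i hi => integrable_finsetSum _ (hint i hi)]
    refine sum_congr rfl fun i hi => ?_
    rw [integral_finsetSum _ (hint i hi)]
    simp_rw [integral_const_mul]
  rw [hmoment1 A hA, hmoment1 B hB, sum_congr rfl fun i hi => by rw [hmean i hi],
    hmoment2 A hA, hmoment2 B hB]
  refine sub_le_sub_right (sum_le_sum fun i hi => sum_le_sum fun j hj => ?_) _
  exact mul_le_mul_of_nonneg_left (hcov i hi j hj) (mul_nonneg (hc i hi) (hc j hj))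

theorem MeasureTheory.MemLp.mul_of_mem_Icc {f u : Ω → ℝ} (hf : MemLp f 2 P)
    (hu : AEStronglyMeasurable u P) (hu_range : ∀ ω, u ω ∈ Set.Icc (0 : ℝ) 1) :
    MemLp (fun ω => f ω * u ω) 2 P :=
  (memLp_top_of_bound hu 1 (Filter.Eventually.of_forall fun ω => by
    rw [Real.norm_eq_abs, abs_of_nonneg (hu_range ω).1]
    exact (hu_range ω).2)).mul hf

/-- The paper's `ρ_{a+1:b}`; in particular `ratioProd ρ 0 t` is `ρ_{1:t}`. -/
def ratioProd (ρ : ℕ → Ω → ℝ) (a b : ℕ) (ω : Ω) : ℝ := ∏ j ∈ Icc (a + 1) b, ρ j ω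

theorem ratioProd_self (ρ : ℕ → Ω → ℝ) (a : ℕ) : ratioProd ρ a a = 1 := by
  ext ω
  simp [ratioProd]

theorem ratioProd_succ (ρ : ℕ → Ω → ℝ) {a b : ℕ} (hab : a ≤ b) (ω : Ω) :
    ratioProd ρ a (b + 1) ω = ratioProd ρ a b ω * ρ (b + 1) ω :=
  prod_Icc_succ_top (by omega) _

theorem ratioProd_mul_ratioProd (ρ : ℕ → Ω → ℝ) {a b c : ℕ} (hab : a ≤ b) (hbc : b ≤ c)
    (ω : Ω) : ratioProd ρ a b ω * ratioProd ρ b c ω = ratioProd ρ a c ω := by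
  simp only [ratioProd, Icc_add_one_left_eq_Ioc]
  exact prod_Ioc_consecutive _ hab hbc

structure IsLikelihoodRatioSeq (P : Measure Ω) (ℱ : Filtration ℕ m0) (ρ : ℕ → Ω → ℝ) (T : ℕ) :
    Prop where
  measurable : ∀ t, 1 ≤ t → t ≤ T → Measurable[ℱ t] (ρ t)
  nonneg : ∀ t, 1 ≤ t → t ≤ T → 0 ≤ ρ t
  integrable : ∀ t, 1 ≤ t → t ≤ T → Integrable (ρ t) P
  condExp_eq_one : ∀ t, 1 ≤ t → t ≤ T → P[ρ t | ℱ (t - 1)] =ᵐ[P] fun _ => 1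

namespace IsLikelihoodRatioSeq

variable {ℱ : Filtration ℕ m0} {ρ : ℕ → Ω → ℝ} {T : ℕ}

theorem ratioProd_nonneg (hρ : IsLikelihoodRatioSeq P ℱ ρ T) (a : ℕ) {b : ℕ} (hbT : b ≤ T) :
    0 ≤ ratioProd ρ a b := fun ω =>
  prod_nonneg fun j hj => by
    simp only [mem_Icc] at hj
    exact hρ.nonneg j (by omega) (by omega) ω

theorem measurable_ratioProd (hρ : IsLikelihoodRatioSeq P ℱ ρ T) (a : ℕ) {b : ℕ} (hbT : b ≤ T) :
    Measurable[ℱ b] (ratioProd ρ a b) :=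
  Finset.measurable_prod _ fun j hj => by
    simp only [mem_Icc] at hj
    exact (hρ.measurable j (by omega) (by omega)).mono (ℱ.mono hj.2) le_rfl

variable [IsFiniteMeasure P]

theorem lintegral_mul_ratioProd (hρ : IsLikelihoodRatioSeq P ℱ ρ T) {b s : ℕ} (hbs : b ≤ s)
    (hsT : s ≤ T) {g : Ω → ℝ≥0∞} (hg : Measurable[ℱ b] g) :
    ∫⁻ ω, g ω * ENNReal.ofReal (ratioProd ρ b s ω) ∂P = ∫⁻ ω, g ω ∂P := by
  induction s, hbs using Nat.le_induction with
  | base => simp [ratioProd_self]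
  | succ s hbs ih =>
    have hmeas : Measurable[ℱ s] fun ω => g ω * ENNReal.ofReal (ratioProd ρ b s ω) :=
      (hg.mono (ℱ.mono hbs) le_rfl).mul (hρ.measurable_ratioProd b (by omega)).ennreal_ofReal
    have hstep := lintegral_mul_ofReal_eq_of_condExp_eq_one (ℱ.le s)
      (Filter.Eventually.of_forall (hρ.nonneg (s + 1) (by omega) hsT))
      (hρ.integrable (s + 1) (by omega) hsT) (hρ.condExp_eq_one (s + 1) (by omega) hsT) hmeas
    rw [← ih (by omega), ← hstep]
    refine lintegral_congr fun ω => ?_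
    rw [ratioProd_succ ρ hbs, ENNReal.ofReal_mul (hρ.ratioProd_nonneg b (by omega) ω), mul_assoc]

theorem integrable_ratioProd (hρ : IsLikelihoodRatioSeq P ℱ ρ T) {b s : ℕ} (hbs : b ≤ s)
    (hsT : s ≤ T) : Integrable (ratioProd ρ b s) P := by
  refine ⟨((hρ.measurable_ratioProd b hsT).mono (ℱ.le s) le_rfl).aestronglyMeasurable, ?_⟩
  rw [hasFiniteIntegral_iff_ofReal (Filter.Eventually.of_forall (hρ.ratioProd_nonneg b hsT))]
  have hlin := hρ.lintegral_mul_ratioProd hbs hsT (g := 1) measurable_const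
  simp only [Pi.one_apply, one_mul, lintegral_one] at hlin
  exact hlin ▸ measure_lt_top P _

theorem integral_mul_ratioProd (hρ : IsLikelihoodRatioSeq P ℱ ρ T) {b s : ℕ} (hbs : b ≤ s)
    (hsT : s ≤ T) {h : Ω → ℝ} (hh : Measurable[ℱ b] h) (hh_nonneg : 0 ≤ h) :
    ∫ ω, h ω * ratioProd ρ b s ω ∂P = ∫ ω, h ω ∂P := by
  have hprod_nonneg := hρ.ratioProd_nonneg b hsT
  rw [integral_eq_lintegral_of_nonneg_ae
      (Filter.Eventually.of_forall fun ω => mul_nonneg (hh_nonneg ω) (hprod_nonneg ω))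
      (((hh.mono (ℱ.mono hbs) le_rfl).mul (hρ.measurable_ratioProd b hsT)).mono (ℱ.le s)
        le_rfl).aestronglyMeasurable,
    integral_eq_lintegral_of_nonneg_ae (Filter.Eventually.of_forall hh_nonneg)
      (hh.mono (ℱ.le b) le_rfl).aestronglyMeasurable]
  simp_rw [ENNReal.ofReal_mul (hh_nonneg _)]
  rw [hρ.lintegral_mul_ratioProd hbs hsT hh.ennreal_ofReal]

theorem integral_ratioProd_zero_mul (hρ : IsLikelihoodRatioSeq P ℱ ρ T) {b : ℕ} (hbT : b ≤ T)
    {g : Ω → ℝ} (hg : Measurable[ℱ b] g) (hg_nonneg : 0 ≤ g) :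
    ∫ ω, ratioProd ρ 0 b ω * g ω ∂P = ∫ ω, ratioProd ρ 0 T ω * g ω ∂P := by
  rw [← hρ.integral_mul_ratioProd hbT le_rfl (h := fun ω => ratioProd ρ 0 b ω * g ω)
    ((hρ.measurable_ratioProd 0 hbT).mul hg)
    fun ω => mul_nonneg (hρ.ratioProd_nonneg 0 hbT ω) (hg_nonneg ω)]
  refine integral_congr_ae (Filter.Eventually.of_forall fun ω => ?_)
  dsimp only
  rw [← ratioProd_mul_ratioProd ρ (Nat.zero_le b) hbT]
  ring

theorem integral_ratioProd_mul_ratioProd_mul_le (hρ : IsLikelihoodRatioSeq P ℱ ρ T)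
    {r : ℕ → Ω → ℝ} (hr_meas : ∀ t, 1 ≤ t → t ≤ T → Measurable[ℱ t] (r t))
    (hr_range : ∀ t ω, r t ω ∈ Set.Icc (0 : ℝ) 1) {t k : ℕ} (ht : 1 ≤ t) (htk : t ≤ k)
    (hkT : k ≤ T) (hA : MemLp (fun ω => ratioProd ρ 0 t ω * r t ω) 2 P)
    (hBt : MemLp (fun ω => ratioProd ρ 0 T ω * r t ω) 2 P)
    (hBk : MemLp (fun ω => ratioProd ρ 0 T ω * r k ω) 2 P)
    (hcorr : t < k → P[fun ω => r k ω * ratioProd ρ t T ω | ℱ t]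
      ≤ᵐ[P] P[fun ω => r k ω * ratioProd ρ t T ω ^ 2 | ℱ t]) :
    ∫ ω, ratioProd ρ 0 t ω * r t ω * (ratioProd ρ 0 k ω * r k ω) ∂P
      ≤ ∫ ω, ratioProd ρ 0 T ω * r t ω * (ratioProd ρ 0 T ω * r k ω) ∂P := by
  have htT : t ≤ T := htk.trans hkT
  have hr_nonneg : ∀ i ω, 0 ≤ r i ω := fun i ω => (hr_range i ω).1
  have hρ_nonneg := hρ.ratioProd_nonneg 0 htT
  have hmart : ∫ ω, ratioProd ρ 0 t ω * r t ω * (ratioProd ρ 0 k ω * r k ω) ∂P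
      = ∫ ω, ratioProd ρ 0 t ω * r t ω * (ratioProd ρ 0 T ω * r k ω) ∂P := by
    have h := hρ.integral_ratioProd_zero_mul hkT
      (g := fun ω => ratioProd ρ 0 t ω * r t ω * r k ω)
      ((((hρ.measurable_ratioProd 0 htT).mul (hr_meas t ht htT)).mono (ℱ.mono htk) le_rfl).mul
        (hr_meas k (ht.trans htk) hkT))
      fun ω => mul_nonneg (mul_nonneg (hρ_nonneg ω) (hr_nonneg t ω)) (hr_nonneg k ω)
    convert h using 3 <;> ring
  rcases htk.eq_or_lt with rfl | htk
  · exact hmart.trans_le (integral_mul_le_integral_mul_self_of_integral_mul_self_eq hA hBt hmart)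
  have hsplit : ∀ ω, ratioProd ρ 0 T ω = ratioProd ρ 0 t ω * ratioProd ρ t T ω := fun ω =>
    (ratioProd_mul_ratioProd ρ (Nat.zero_le t) htT ω).symm
  -- Condition on `ℱ t`, pulling out the `ℱ t`-measurable weight `ρ_{1:t}² r_t`.
  have hpull := integral_mul_le_integral_mul_of_condExp_le (P := P) (ℱ.le t)
    (w := fun ω => ratioProd ρ 0 t ω ^ 2 * r t ω)
    (f := fun ω => r k ω * ratioProd ρ t T ω) (g := fun ω => r k ω * ratioProd ρ t T ω ^ 2)
    (((hρ.measurable_ratioProd 0 htT).pow_const 2).mul (hr_meas t ht htT)).stronglyMeasurable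
    (Filter.Eventually.of_forall fun ω => mul_nonneg (sq_nonneg _) (hr_nonneg t ω))
    (Filter.Eventually.of_forall fun ω => mul_nonneg (hr_nonneg k ω) (sq_nonneg _))
    ((hρ.integrable_ratioProd htT le_rfl).bdd_mul
      ((hr_meas k (ht.trans htk.le) hkT).mono (ℱ.le k) le_rfl).aestronglyMeasurable
      (c := 1) (Filter.Eventually.of_forall fun ω => by
        rw [Real.norm_eq_abs, abs_of_nonneg (hr_nonneg k ω)]
        exact (hr_range k ω).2))
    ((hA.integrable_mul hBk).congr (Filter.Eventually.of_forall fun ω => by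
      simp only [Pi.mul_apply]; rw [hsplit]; ring))
    ((hBt.integrable_mul hBk).congr (Filter.Eventually.of_forall fun ω => by
      simp only [Pi.mul_apply]; rw [hsplit]; ring))
    (hcorr htk)
  rw [hmart]
  convert hpull using 3 <;> rw [hsplit] <;> ring

end IsLikelihoodRatioSeq

end

/-- In the likelihood-ratio filtration setup, if for all `1 ≤ t < k ≤ T`,
a.s. `E[r_k (ρ_{t+1:T})² | ℱ_t] ≥ E[r_k ρ_{t+1:T} | ℱ_t]` (conditional nonnegative
correlation of `ρ_{t+1:T}` and `r_k ρ_{t+1:T}`), then the per-decision estimator has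
variance no larger than the crude importance-sampling estimator, with
`Var(X) := E[X²] − (E[X])²`. -/
theorem pdis_variance_le_is_variance
    {Ω : Type*} {m0 : MeasurableSpace Ω} (P : Measure Ω) [IsProbabilityMeasure P]
    (T : ℕ) (ℱ : MeasureTheory.Filtration ℕ m0)
    (γ : ℝ) (hγ : γ ∈ Set.Ioc (0 : ℝ) 1)
    (ρ : ℕ → Ω → ℝ)
    (hρ_meas : ∀ t, 1 ≤ t → t ≤ T → Measurable[ℱ t] (ρ t))
    (hρ_nonneg : ∀ t ω, 0 ≤ ρ t ω)
    (hρ_int : ∀ t, 1 ≤ t → t ≤ T → Integrable (ρ t) P)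
    (hρ_cond : ∀ t, 1 ≤ t → t ≤ T → P[ρ t | ℱ (t - 1)] =ᵐ[P] fun _ => (1 : ℝ))
    (ρprod : ℕ → Ω → ℝ)
    (hρprod : ∀ t ω, ρprod t ω = ∏ k ∈ Icc 1 t, ρ k ω)
    (r : ℕ → Ω → ℝ)
    (hr_meas : ∀ t, 1 ≤ t → t ≤ T → Measurable[ℱ t] (r t))
    (hr_range : ∀ t ω, r t ω ∈ Set.Icc (0 : ℝ) 1)
    (hρprod_sq : ∀ t, 1 ≤ t → t ≤ T → MemLp (ρprod t) 2 P)
    (h_pos_corr : ∀ t k, 1 ≤ t → t < k → k ≤ T →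
      ∀ᵐ ω ∂P,
        (P[fun ω' => r k ω' * ∏ j ∈ Icc (t + 1) T, ρ j ω' | ℱ t]) ω
          ≤ (P[fun ω' => r k ω' * (∏ j ∈ Icc (t + 1) T, ρ j ω') ^ 2 | ℱ t]) ω) :
    (∫ ω, (∑ t ∈ Icc 1 T, γ ^ (t - 1) * ρprod t ω * r t ω) ^ 2 ∂P)
        - (∫ ω, ∑ t ∈ Icc 1 T, γ ^ (t - 1) * ρprod t ω * r t ω ∂P) ^ 2
      ≤ (∫ ω, (ρprod T ω * ∑ t ∈ Icc 1 T, γ ^ (t - 1) * r t ω) ^ 2 ∂P)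
        - (∫ ω, ρprod T ω * ∑ t ∈ Icc 1 T, γ ^ (t - 1) * r t ω ∂P) ^ 2 := by
  obtain rfl : ρprod = ratioProd ρ 0 := funext₂ hρprod
  have hρ : IsLikelihoodRatioSeq P ℱ ρ T := ⟨hρ_meas, fun t _ _ => hρ_nonneg t, hρ_int, hρ_cond⟩
  have hr_aesm : ∀ t ∈ Icc 1 T, AEStronglyMeasurable (r t) P := fun t ht =>
    ((hr_meas t (mem_Icc.1 ht).1 (mem_Icc.1 ht).2).mono (ℱ.le t) le_rfl).aestronglyMeasurable
  have hA : ∀ t ∈ Icc 1 T, MemLp (fun ω => ratioProd ρ 0 t ω * r t ω) 2 P := fun t ht =>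
    (hρprod_sq t (mem_Icc.1 ht).1 (mem_Icc.1 ht).2).mul_of_mem_Icc (hr_aesm t ht) (hr_range t)
  have hB : ∀ t ∈ Icc 1 T, MemLp (fun ω => ratioProd ρ 0 T ω * r t ω) 2 P := fun t ht =>
    (hρprod_sq T ((mem_Icc.1 ht).1.trans (mem_Icc.1 ht).2) le_rfl).mul_of_mem_Icc (hr_aesm t ht)
      (hr_range t)
  have hmean : ∀ t ∈ Icc 1 T,
      ∫ ω, ratioProd ρ 0 t ω * r t ω ∂P = ∫ ω, ratioProd ρ 0 T ω * r t ω ∂P := fun t ht =>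
    hρ.integral_ratioProd_zero_mul (mem_Icc.1 ht).2
      (hr_meas t (mem_Icc.1 ht).1 (mem_Icc.1 ht).2) fun ω => (hr_range t ω).1
  have hcov : ∀ t ∈ Icc 1 T, ∀ k ∈ Icc 1 T,
      ∫ ω, ratioProd ρ 0 t ω * r t ω * (ratioProd ρ 0 k ω * r k ω) ∂P
        ≤ ∫ ω, ratioProd ρ 0 T ω * r t ω * (ratioProd ρ 0 T ω * r k ω) ∂P := by
    intro t ht k hk
    rw [mem_Icc] at ht hk
    rcases le_total t k with htk | hkt
    · exact hρ.integral_ratioProd_mul_ratioProd_mul_le hr_meas hr_range ht.1 htk hk.2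
        (hA t (mem_Icc.2 ht)) (hB t (mem_Icc.2 ht)) (hB k (mem_Icc.2 hk))
        (h_pos_corr t k ht.1 · hk.2)
    · simp_rw [mul_comm (ratioProd ρ 0 t _ * r t _), mul_comm (ratioProd ρ 0 T _ * r t _)]
      exact hρ.integral_ratioProd_mul_ratioProd_mul_le hr_meas hr_range hk.1 hkt ht.2
        (hA k (mem_Icc.2 hk)) (hB k (mem_Icc.2 hk)) (hB t (mem_Icc.2 ht))
        (h_pos_corr k t hk.1 · ht.2)
  simp_rw [mul_assoc, mul_sum, mul_left_comm (ratioProd ρ 0 T _) (γ ^ _)]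
  exact integral_sq_sum_sub_sq_integral_sum_le (Icc 1 T) (fun t => γ ^ (t - 1))
    (fun t _ => pow_nonneg hγ.1.le _) hA hB hmean hcov
end

section
/- Let (Ω, ℱ, P) be a probability space, Y_1, …, Y_T square-integrable real random variables, 𝒢_1, …, 𝒢_T sub-σ-algebras of ℱ, and Z_t := E[Y_t | 𝒢_t]. If Cov(Y_t, Y_k) ≥ Cov(Z_t, Z_k) for all 1 ≤ t < k ≤ T, then Var(∑_{t=1}^T Z_t) ≤ Var(∑_{t=1}^T Y_t). (Applied with Y_t = γ^{t−1} ρ_{1:t} r_t the per-decision importance-sampling summands and 𝒢_t = σ(s_t, a_t, r_t), so that Z_t are the stationary importance-sampling summands, this gives Var(v̂_SIS) ≤ Var(v̂_PDIS) under the stated covariance ordering.) -/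
/-!
Expanding the variance of a sum into the covariance matrix, it suffices to compare the entries.
Off the diagonal this is the hypothesis (covariance is symmetric). On the diagonal it is the law
of total variance: `Var[E[Y | 𝒢]] = Var[Y] - E[Var[Y | 𝒢]] ≤ Var[Y]`.
-/

open MeasureTheory Finset ProbabilityTheory

namespace ProbabilityTheory

variable {Ω : Type*} {m m₀ : MeasurableSpace Ω} {μ : Measure Ω}

lemma variance_condExp_le_s4 [IsProbabilityMeasure μ] (hm : m ≤ m₀) {X : Ω → ℝ}
    (hX : MemLp X 2 μ) : Var[μ[X | m]; μ] ≤ Var[X; μ] := by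
  rw [← integral_condVar_add_variance_condExp hm hX]
  refine le_add_of_nonneg_left (integral_nonneg_of_ae ?_)
  exact condExp_nonneg (ae_of_all _ fun ω ↦ sq_nonneg _)

lemma variance_fun_sum_le_of_covariance_le [IsFiniteMeasure μ] {ι : Type*} [Fintype ι]
    [LinearOrder ι] {X Y : ι → Ω → ℝ} (hX : ∀ i, MemLp (X i) 2 μ) (hY : ∀ i, MemLp (Y i) 2 μ)
    (hvar : ∀ i, Var[X i; μ] ≤ Var[Y i; μ])
    (hcov : ∀ i j, i < j → cov[X i, X j; μ] ≤ cov[Y i, Y j; μ]) :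
    Var[fun ω ↦ ∑ i, X i ω; μ] ≤ Var[fun ω ↦ ∑ i, Y i ω; μ] := by
  rw [variance_fun_sum hX, variance_fun_sum hY]
  refine sum_le_sum fun i _ ↦ sum_le_sum fun j _ ↦ ?_
  rcases lt_trichotomy i j with hij | rfl | hji
  · exact hcov i j hij
  · rw [covariance_self (hX i).aemeasurable, covariance_self (hY i).aemeasurable]
    exact hvar i
  · rw [covariance_comm (X i), covariance_comm (Y i)]
    exact hcov j i hji

end ProbabilityTheory

/-- If `Z_t := E[Y_t | 𝒢_t]` and `Cov(Y_t, Y_k) ≥ Cov(Z_t, Z_k)` for all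
`t < k`, then `Var(∑ Z_t) ≤ Var(∑ Y_t)`, where `Var(X) := E[X²] − (E[X])²` and
`Cov(X,Y) := E[XY] − E[X]E[Y]`. -/
theorem variance_of_sum_condexp_le_of_cov_le
    {Ω : Type*} {m0 : MeasurableSpace Ω} (P : Measure Ω) [IsProbabilityMeasure P]
    (T : ℕ) (Y : Fin T → Ω → ℝ) (hY : ∀ t, MemLp (Y t) 2 P)
    (𝒢 : Fin T → MeasurableSpace Ω) (h𝒢 : ∀ t, 𝒢 t ≤ m0)
    (Z : Fin T → Ω → ℝ) (hZ : ∀ t, Z t = P[Y t | 𝒢 t])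
    (hcov : ∀ t k : Fin T, t < k →
      (∫ ω, Z t ω * Z k ω ∂P) - (∫ ω, Z t ω ∂P) * (∫ ω, Z k ω ∂P)
        ≤ (∫ ω, Y t ω * Y k ω ∂P) - (∫ ω, Y t ω ∂P) * (∫ ω, Y k ω ∂P)) :
    (∫ ω, (∑ t, Z t ω) ^ 2 ∂P) - (∫ ω, ∑ t, Z t ω ∂P) ^ 2
      ≤ (∫ ω, (∑ t, Y t ω) ^ 2 ∂P) - (∫ ω, ∑ t, Y t ω ∂P) ^ 2 := by
  have hZ₂ : ∀ t, MemLp (Z t) 2 P := fun t ↦ hZ t ▸ (hY t).condExp one_le_two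
  have hvar : Var[fun ω ↦ ∑ t, Z t ω; P] ≤ Var[fun ω ↦ ∑ t, Y t ω; P] := by
    refine variance_fun_sum_le_of_covariance_le hZ₂ hY (fun t ↦ ?_) fun t k htk ↦ ?_
    · exact hZ t ▸ variance_condExp_le_s4 (h𝒢 t) (hY t)
    · rw [covariance_eq_sub (hZ₂ t) (hZ₂ k), covariance_eq_sub (hY t) (hY k)]
      exact hcov t k htk
  rwa [variance_eq_sub (memLp_finsetSum _ fun t _ ↦ hZ₂ t),
    variance_eq_sub (memLp_finsetSum _ fun t _ ↦ hY t)] at hvar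
end

section
/- Let (Ω, 𝒜, m) be a probability space, τ : Ω → Ω an ergodic measure-preserving map, and g : Ω → ℝ integrable with c := −∫ g dm > 0. Set ρ_{1:T} := exp(∑_{k=0}^{T−1} g ∘ τ^k). Then ρ_{1:T} → 0 almost surely as T → ∞, and for any γ ∈ (0,1] and any sequence of measurable functions r_t : Ω → [0,1], the importance-weighted return ρ_{1:T} ∑_{t=1}^T γ^{t−1} r_t → 0 almost surely as T → ∞. -/
open MeasureTheory Filter Finset

/-!
Since `∫ (g + c/2) = -c/2 < 0`, the Birkhoff sums of `g + c/2` are a.s. bounded above by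
ergodicity, i.e. `∑_{k<T} g ∘ τᵏ ≤ C - T c/2`. Hence `ρ_{1:T} ≤ e^C e^{-Tc/2}`, which beats the
at most linear growth of the discounted return.

The boundedness is a maximal-ergodic argument with the running maxima `M_n = max_{k ≤ n} S_k` of
the Birkhoff sums `S_k` of `f`. The increments `M_{n+1} - M_n ∘ τ` have nonnegative integral
since `τ` preserves `m`, they lie between `f` and `max f 0`, and they equal `f` eventually
wherever the `S_k` are unbounded. If that happened almost everywhere, dominated convergence would
give `0 ≤ ∫ f`; the set where it happens is invariant, so for `∫ f < 0` ergodicity makes it null.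
-/

section BirkhoffSumMax

variable {Ω : Type*} {τ : Ω → Ω} {f : Ω → ℝ}

variable (τ f) in
noncomputable def birkhoffSumMax (n : ℕ) : Ω → ℝ :=
  (range (n + 1)).sup' nonempty_range_add_one fun k => birkhoffSum τ f k

lemma birkhoffSumMax_apply (n : ℕ) (ω : Ω) :
    birkhoffSumMax τ f n ω =
      (range (n + 1)).sup' nonempty_range_add_one fun k => birkhoffSum τ f k ω :=
  Finset.sup'_apply _ _ _

lemma birkhoffSum_le_birkhoffSumMax {k n : ℕ} (hk : k ≤ n) (ω : Ω) :
    birkhoffSum τ f k ω ≤ birkhoffSumMax τ f n ω := by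
  rw [birkhoffSumMax_apply]
  exact le_sup' (fun k => birkhoffSum τ f k ω) (mem_range_succ_iff.2 hk)

lemma birkhoffSumMax_nonneg (n : ℕ) (ω : Ω) : 0 ≤ birkhoffSumMax τ f n ω := by
  simpa using birkhoffSum_le_birkhoffSumMax (τ := τ) (f := f) n.zero_le ω

lemma birkhoffSumMax_mono (ω : Ω) : Monotone fun n => birkhoffSumMax τ f n ω := by
  intro n n' hn
  dsimp only
  rw [birkhoffSumMax_apply]
  exact sup'_le _ _ fun k hk => birkhoffSum_le_birkhoffSumMax ((mem_range_succ_iff.1 hk).trans hn) ω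

lemma birkhoffSumMax_succ_le (n : ℕ) (ω : Ω) :
    birkhoffSumMax τ f (n + 1) ω ≤ max 0 (f ω + birkhoffSumMax τ f n (τ ω)) := by
  rw [birkhoffSumMax_apply]
  refine sup'_le _ _ fun k hk => ?_
  rcases k with _ | k
  · simp
  · rw [birkhoffSum_succ']
    have hk : k ≤ n := by simpa using hk
    exact le_max_of_le_right (add_le_add_right (birkhoffSum_le_birkhoffSumMax hk _) _)

lemma le_birkhoffSumMax_succ_sub (n : ℕ) (ω : Ω) :
    f ω ≤ birkhoffSumMax τ f (n + 1) ω - birkhoffSumMax τ f n (τ ω) := by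
  have : birkhoffSumMax τ f n (τ ω) ≤ birkhoffSumMax τ f (n + 1) ω - f ω := by
    rw [birkhoffSumMax_apply]
    refine sup'_le _ _ fun k hk => le_sub_iff_add_le'.2 ?_
    rw [← birkhoffSum_succ']
    exact birkhoffSum_le_birkhoffSumMax (by simpa using hk) ω
  linarith

lemma abs_birkhoffSumMax_succ_sub_le (n : ℕ) (ω : Ω) :
    |birkhoffSumMax τ f (n + 1) ω - birkhoffSumMax τ f n (τ ω)| ≤ |f ω| := by
  have hupper := birkhoffSumMax_succ_le (τ := τ) (f := f) n ω
  have hlower := le_birkhoffSumMax_succ_sub (τ := τ) (f := f) n ω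
  have hnonneg := birkhoffSumMax_nonneg (τ := τ) (f := f) n (τ ω)
  rw [abs_le]
  constructor
  · linarith [neg_abs_le (f ω)]
  · rcases le_total 0 (f ω + birkhoffSumMax τ f n (τ ω)) with h | h
    · rw [max_eq_right h] at hupper
      linarith [le_abs_self (f ω)]
    · rw [max_eq_left h] at hupper
      linarith [abs_nonneg (f ω)]

lemma tendsto_birkhoffSumMax_succ_sub {ω : Ω}
    (hω : ¬BddAbove (Set.range fun n => birkhoffSum τ f n (τ ω))) :
    Tendsto (fun n => birkhoffSumMax τ f (n + 1) ω - birkhoffSumMax τ f n (τ ω)) atTop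
      (nhds (f ω)) := by
  obtain ⟨_, ⟨N, rfl⟩, hN⟩ := not_bddAbove_iff.1 hω (-f ω)
  refine tendsto_const_nhds.congr' (eventually_atTop.2 ⟨N, fun n hn => ?_⟩)
  have hpos : 0 ≤ f ω + birkhoffSumMax τ f n (τ ω) := by
    linarith [birkhoffSum_le_birkhoffSumMax (τ := τ) (f := f) hn (τ ω)]
  have hupper := birkhoffSumMax_succ_le (τ := τ) (f := f) n ω
  rw [max_eq_right hpos] at hupper
  linarith [le_birkhoffSumMax_succ_sub (τ := τ) (f := f) n ω]

lemma bddAbove_range_birkhoffSum_apply_iff (ω : Ω) :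
    BddAbove (Set.range fun n => birkhoffSum τ f n (τ ω)) ↔
      BddAbove (Set.range fun n => birkhoffSum τ f n ω) := by
  simp only [bddAbove_def, Set.forall_mem_range]
  constructor
  · rintro ⟨C, hC⟩
    refine ⟨max 0 (f ω + C), fun n => ?_⟩
    rcases n with _ | n
    · simp
    · rw [birkhoffSum_succ']
      exact le_max_of_le_right (by linarith [hC n])
  · rintro ⟨C, hC⟩
    exact ⟨C - f ω, fun n => by linarith [hC (n + 1), birkhoffSum_succ' τ f n ω]⟩

end BirkhoffSumMax

section Measure

variable {Ω : Type*} [MeasurableSpace Ω] {μ : Measure Ω} {τ : Ω → Ω} {f : Ω → ℝ}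

lemma Measurable.birkhoffSum (hτ : Measurable τ) (hf : Measurable f) (n : ℕ) :
    Measurable (birkhoffSum τ f n) :=
  Finset.measurable_sum _ fun k _ => hf.comp (hτ.iterate k)

lemma MeasureTheory.Integrable.birkhoffSum (hτ : MeasurePreserving τ μ μ) (hf : Integrable f μ)
    (n : ℕ) : Integrable (birkhoffSum τ f n) μ :=
  integrable_finsetSum _ fun k _ => (hτ.iterate k).integrable_comp_of_integrable hf

lemma MeasureTheory.Integrable.birkhoffSumMax (hτ : MeasurePreserving τ μ μ)
    (hf : Integrable f μ) (n : ℕ) : Integrable (birkhoffSumMax τ f n) μ :=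
  sup'_induction (p := (Integrable · μ)) _ _ (fun _ h₁ _ h₂ => h₁.sup h₂) fun k _ =>
    hf.birkhoffSum hτ k

lemma integral_birkhoffSumMax_succ_sub_nonneg (hτ : MeasurePreserving τ μ μ)
    (hf : Integrable f μ) (n : ℕ) :
    0 ≤ ∫ ω, (birkhoffSumMax τ f (n + 1) ω - birkhoffSumMax τ f n (τ ω)) ∂μ := by
  have hM := hf.birkhoffSumMax hτ
  have hcomp : ∫ ω, birkhoffSumMax τ f n (τ ω) ∂μ = ∫ ω, birkhoffSumMax τ f n ω ∂μ := by
    conv_rhs => rw [← hτ.map_eq]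
    exact (integral_map hτ.measurable.aemeasurable
      (hτ.map_eq.symm ▸ (hM n).aestronglyMeasurable)).symm
  have hMτ : Integrable (fun ω => birkhoffSumMax τ f n (τ ω)) μ :=
    hτ.integrable_comp_of_integrable (hM n)
  rw [integral_sub (hM (n + 1)) hMτ, hcomp]
  exact sub_nonneg.2 (integral_mono (hM n) (hM (n + 1)) fun ω => birkhoffSumMax_mono ω n.le_succ)

theorem integral_nonneg_of_ae_not_bddAbove_birkhoffSum (hτ : MeasurePreserving τ μ μ)
    (hf : Integrable f μ) (h : ∀ᵐ ω ∂μ, ¬BddAbove (Set.range fun n => birkhoffSum τ f n ω)) :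
    0 ≤ ∫ ω, f ω ∂μ := by
  have hM := hf.birkhoffSumMax hτ
  have hlim : Tendsto (fun n => ∫ ω, (birkhoffSumMax τ f (n + 1) ω - birkhoffSumMax τ f n (τ ω)) ∂μ)
      atTop (nhds (∫ ω, f ω ∂μ)) :=
    tendsto_integral_of_dominated_convergence (fun ω => |f ω|)
      (fun n => ((hM (n + 1)).sub (hτ.integrable_comp_of_integrable (hM n) :
        Integrable (fun ω => birkhoffSumMax τ f n (τ ω)) μ)).aestronglyMeasurable)
      hf.abs (fun n => ae_of_all _ fun ω => abs_birkhoffSumMax_succ_sub_le n ω)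
      (hτ.quasiMeasurePreserving.ae h |>.mono fun _ => tendsto_birkhoffSumMax_succ_sub)
  exact ge_of_tendsto' hlim (integral_birkhoffSumMax_succ_sub_nonneg hτ hf)

theorem Ergodic.ae_bddAbove_birkhoffSum (hτ : Ergodic τ μ) (hf : Integrable f μ)
    (hneg : ∫ ω, f ω ∂μ < 0) :
    ∀ᵐ ω ∂μ, BddAbove (Set.range fun n => birkhoffSum τ f n ω) := by
  set f' := hf.1.mk f
  have hff' : f =ᵐ[μ] f' := hf.1.ae_eq_mk
  have hbdd' : ∀ᵐ ω ∂μ, BddAbove (Set.range fun n => birkhoffSum τ f' n ω) := by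
    have hmeas := measurableSet_bddAbove_range
      (hτ.measurable.birkhoffSum hf.1.stronglyMeasurable_mk.measurable)
    have hinv : τ ⁻¹' {ω | BddAbove (Set.range fun n => birkhoffSum τ f' n ω)} =
        {ω | BddAbove (Set.range fun n => birkhoffSum τ f' n ω)} :=
      Set.ext fun ω => bddAbove_range_birkhoffSum_apply_iff ω
    refine (hτ.ae_mem_or_ae_notMem hmeas hinv).resolve_right fun hunbdd => ?_
    have := integral_nonneg_of_ae_not_bddAbove_birkhoffSum hτ.toMeasurePreserving
      (hf.congr hff') hunbdd
    rw [← integral_congr_ae hff'] at this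
    linarith
  filter_upwards [hbdd', ae_all_iff.2
    (hτ.quasiMeasurePreserving.birkhoffSum_ae_eq_of_ae_eq hff')] with ω hω heq
  simpa only [heq] using hω

theorem Ergodic.ae_exists_birkhoffSum_le_sub_mul [IsProbabilityMeasure μ] (hτ : Ergodic τ μ)
    (hf : Integrable f μ) {ε : ℝ} (hε : ∫ ω, f ω ∂μ < -ε) :
    ∀ᵐ ω ∂μ, ∃ C, ∀ n : ℕ, birkhoffSum τ f n ω ≤ C - n * ε := by
  have hfε : Integrable (fun ω => f ω + ε) μ := hf.add (integrable_const ε)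
  have hneg : ∫ ω, (f ω + ε) ∂μ < 0 := by
    rw [integral_add hf (integrable_const ε)]
    simp only [integral_const, probReal_univ, one_smul]
    linarith
  filter_upwards [hτ.ae_bddAbove_birkhoffSum hfε hneg] with ω ⟨C, hC⟩
  refine ⟨C, fun n => ?_⟩
  have hsplit : birkhoffSum τ (fun ω => f ω + ε) n ω = birkhoffSum τ f n ω + n * ε := by
    simp [birkhoffSum, sum_add_distrib]
  linarith [hC ⟨n, rfl⟩]

end Measure

lemma tendsto_exp_mul_of_le_sub_mul {a b : ℕ → ℝ} {C ε : ℝ} (hε : 0 < ε)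
    (ha : ∀ n, a n ≤ C - n * ε) (hb : ∀ n, |b n| ≤ n + 1) :
    Tendsto (fun n => Real.exp (a n) * b n) atTop (nhds 0) := by
  set q := Real.exp (-ε)
  have hq : |q| < 1 := by
    rw [abs_of_pos (Real.exp_pos _)]
    exact Real.exp_lt_one_iff.2 (neg_neg_of_pos hε)
  have hlim : Tendsto (fun n : ℕ => Real.exp C * (n * q ^ n + q ^ n)) atTop (nhds 0) := by
    simpa using ((tendsto_self_mul_const_pow_of_abs_lt_one hq).add
      (tendsto_pow_atTop_nhds_zero_of_abs_lt_one hq)).const_mul (Real.exp C)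
  refine squeeze_zero_norm (fun n => ?_) hlim
  calc ‖Real.exp (a n) * b n‖ = Real.exp (a n) * |b n| := by
        rw [norm_mul, Real.norm_eq_abs, Real.norm_eq_abs, abs_of_pos (Real.exp_pos _)]
    _ ≤ Real.exp (C - n * ε) * (n + 1) :=
        mul_le_mul (Real.exp_le_exp.2 (ha n)) (hb n) (abs_nonneg _) (Real.exp_pos _).le
    _ = Real.exp C * (n * q ^ n + q ^ n) := by
        rw [sub_eq_add_neg, Real.exp_add, ← mul_neg, Real.exp_nat_mul]
        ring

lemma abs_sum_Icc_pow_mul_le {γ : ℝ} (hγ : γ ∈ Set.Icc (0 : ℝ) 1) {r : ℕ → ℝ}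
    (hr : ∀ t, r t ∈ Set.Icc (0 : ℝ) 1) (T : ℕ) :
    |∑ t ∈ Icc 1 T, γ ^ (t - 1) * r t| ≤ T := by
  calc |∑ t ∈ Icc 1 T, γ ^ (t - 1) * r t| ≤ ∑ t ∈ Icc 1 T, |γ ^ (t - 1) * r t| :=
        abs_sum_le_sum_abs _ _
    _ ≤ ∑ _t ∈ Icc 1 T, (1 : ℝ) := sum_le_sum fun t _ => by
        rw [abs_of_nonneg (mul_nonneg (pow_nonneg hγ.1 _) (hr t).1)]
        exact mul_le_one₀ (pow_le_one₀ hγ.1 hγ.2) (hr t).1 (hr t).2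
    _ = T := by simp

/-- For an ergodic measure-preserving `τ`, integrable `g` with
`c := −∫ g dm > 0`, and `ρ_{1:T} := exp(∑_{k<T} g ∘ τᵏ)`, we have `ρ_{1:T} → 0` a.s.,
and for any `γ ∈ (0,1]` and measurable `r_t : Ω → [0,1]`, the importance-weighted
return `ρ_{1:T} ∑_{t=1}^T γ^{t−1} r_t → 0` a.s. as `T → ∞`. -/
theorem likelihood_ratio_tendsto_zero
    {Ω : Type*} {mΩ : MeasurableSpace Ω} (m : Measure Ω) [IsProbabilityMeasure m]
    (τ : Ω → Ω) (hτ : Ergodic τ m)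
    (g : Ω → ℝ) (hg : Integrable g m)
    (c : ℝ) (hc : c = -∫ ω, g ω ∂m) (hc_pos : 0 < c)
    (ρ : ℕ → Ω → ℝ)
    (hρ : ∀ T ω, ρ T ω = Real.exp (∑ k ∈ Finset.range T, g (τ^[k] ω))) :
    (∀ᵐ ω ∂m, Tendsto (fun T : ℕ => ρ T ω) atTop (nhds 0)) ∧
    ∀ (γ : ℝ), γ ∈ Set.Ioc (0 : ℝ) 1 →
      ∀ (r : ℕ → Ω → ℝ), (∀ t, Measurable (r t)) → (∀ t ω, r t ω ∈ Set.Icc (0 : ℝ) 1) →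
      ∀ᵐ ω ∂m,
        Tendsto (fun T : ℕ => ρ T ω * ∑ t ∈ Icc 1 T, γ ^ (t - 1) * r t ω)
          atTop (nhds 0) := by
  have hρ' : ∀ T ω, ρ T ω = Real.exp (birkhoffSum τ g T ω) := hρ
  have hdrift : ∀ᵐ ω ∂m, ∃ C, ∀ T : ℕ, birkhoffSum τ g T ω ≤ C - T * (c / 2) :=
    hτ.ae_exists_birkhoffSum_le_sub_mul hg (by linarith)
  refine ⟨?_, fun γ hγ r _ hr => ?_⟩ <;> filter_upwards [hdrift] with ω ⟨C, hC⟩ <;>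
    simp only [hρ']
  · simpa using tendsto_exp_mul_of_le_sub_mul (b := 1) (half_pos hc_pos) hC fun T => by simp
  · refine tendsto_exp_mul_of_le_sub_mul (half_pos hc_pos) hC fun T => ?_
    linarith [abs_sum_Icc_pow_mul_le (Set.Ioc_subset_Icc_self hγ) (fun t => hr t ω) T]
end

section
/- In the likelihood-ratio filtration setup, let Y := ρ_{1:T} ∑_{t=1}^T γ^{t−1} r_t with v := E[Y] > 0 and Y square-integrable. Suppose there exist constants c > 0, d > 0, F ≥ 0, a martingale (M_t)_{t=0}^T adapted to (ℱ_t) with M_0 = 0 and |M_t − M_{t−1}| ≤ d almost surely, and a random variable D with |D| ≤ 2F almost surely, such that log ρ_{1:T} = −Tc + D + M_T. If T satisfies Tc/2 ≥ 2F + log(2T) − log v, then Var(Y) ≥ (v²/4) exp( T c² / (8 d²) ) − v²; in particular the variance of the crude importance-sampling estimator grows at least exponentially in the horizon T. -/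
/-!
Let `S = {M_T ≥ Tc/2}`. Off `S` the decomposition gives `ρ_{1:T} ≤ exp (2F - Tc/2) ≤ v / (2T)`,
while the discounted return is at most `T`, so `Y ≤ v/2` there and hence `E[Y; S] ≥ v/2`.
Cauchy–Schwarz turns this into `v²/4 ≤ E[Y²] P(S)`. Bounded increments make `M_T` sub-Gaussian
with variance proxy `T d²` (Hoeffding's convexity bound for each increment, conditioned on the
past), so the Chernoff bound gives `P(S) ≤ exp (-Tc²/(8d²))`.
-/

open MeasureTheory ProbabilityTheory Finset Real

theorem exp_mul_le_cosh_add_div_mul_sinh {l x d : ℝ} (hx : |x| ≤ d) :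
    exp (l * x) ≤ cosh (l * d) + x / d * sinh (l * d) := by
  obtain ⟨hdx, hxd⟩ := abs_le.mp hx
  rcases (abs_nonneg x |>.trans hx).eq_or_lt with rfl | hd
  · obtain rfl : x = 0 := by linarith
    simp
  have ha : 0 ≤ (d - x) / (2 * d) := div_nonneg (by linarith) (by positivity)
  have hb : 0 ≤ (d + x) / (2 * d) := div_nonneg (by linarith) (by positivity)
  calc exp (l * x) = exp ((d - x) / (2 * d) * -(l * d) + (d + x) / (2 * d) * (l * d)) := by
        congr 1; field_simp; ring
    _ ≤ (d - x) / (2 * d) * exp (-(l * d)) + (d + x) / (2 * d) * exp (l * d) :=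
        convexOn_exp.2 (Set.mem_univ _) (Set.mem_univ _) ha hb (by field_simp; ring)
    _ = cosh (l * d) + x / d * sinh (l * d) := by
        rw [cosh_eq, sinh_eq]; field_simp; ring

theorem sq_setIntegral_le_measureReal_mul_integral_sq {α : Type*} {m : MeasurableSpace α}
    {μ : Measure α} {f : α → ℝ} (hf : MemLp f 2 μ) {s : Set α} (hs : MeasurableSet s)
    (hμs : μ s ≠ ⊤) : (∫ x in s, f x ∂μ) ^ 2 ≤ μ.real s * ∫ x, f x ^ 2 ∂μ := by
  set I := indicatorConstLp 2 hs hμs (1 : ℝ)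
  have hinner : inner ℝ I (hf.toLp f) = ∫ x in s, f x ∂μ := by
    rw [L2.inner_indicatorConstLp_one]
    exact integral_congr_ae (ae_restrict_of_ae hf.coeFn_toLp)
  have hnormI : ‖I‖ ^ 2 = μ.real s := by
    rw [norm_indicatorConstLp two_ne_zero ENNReal.ofNat_ne_top, ENNReal.toReal_ofNat,
      ← sqrt_eq_rpow, norm_one, one_mul, sq_sqrt measureReal_nonneg]
  have hnormF : ‖hf.toLp f‖ ^ 2 = ∫ x, f x ^ 2 ∂μ := by
    rw [← real_inner_self_eq_norm_sq, L2.inner_def]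
    exact integral_congr_ae (hf.coeFn_toLp.mono fun x hx => by simp [hx, sq])
  rw [← hinner, ← hnormI, ← hnormF, ← mul_pow, ← sq_abs]
  exact pow_le_pow_left₀ (abs_nonneg _) (abs_real_inner_le_norm I (hf.toLp f)) 2

theorem integral_le_add_setIntegral_of_ae_notMem_le {α : Type*} {m : MeasurableSpace α}
    {μ : Measure α} [IsProbabilityMeasure μ] {f : α → ℝ} {s : Set α} {a : ℝ}
    (hs : MeasurableSet s) (hf : Integrable f μ) (ha : 0 ≤ a)
    (hfs : ∀ᵐ x ∂μ, x ∉ s → f x ≤ a) : ∫ x, f x ∂μ ≤ a + ∫ x in s, f x ∂μ := by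
  have hint : Integrable (fun x => a + s.indicator f x) μ :=
    (integrable_const a).add (hf.indicator hs)
  calc ∫ x, f x ∂μ ≤ ∫ x, a + s.indicator f x ∂μ := by
        refine integral_mono_ae hf hint ?_
        filter_upwards [hfs] with x hx
        by_cases hxs : x ∈ s
        · simp [hxs, ha]
        · simpa [hxs] using hx hxs
    _ = a + ∫ x in s, f x ∂μ := by
        rw [integral_add (integrable_const a) (hf.indicator hs), integral_indicator hs]
        simp

theorem mul_le_half_of_log_le {ρ s v T : ℝ} (hρ : 0 ≤ ρ) (hs : s ∈ Set.Icc 0 T) (hv : 0 < v)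
    (hT : 0 < T) (hlog : log ρ ≤ log v - log (2 * T)) : ρ * s ≤ v / 2 := by
  rcases hρ.eq_or_lt with rfl | hρ
  · rw [zero_mul]; positivity
  have hρle : ρ ≤ v / (2 * T) := by
    rwa [← log_le_log_iff hρ (by positivity), log_div hv.ne' (by positivity)]
  calc ρ * s ≤ v / (2 * T) * T := mul_le_mul hρle hs.2 hs.1 (by positivity)
    _ = v / 2 := by field_simp

theorem sum_pow_mul_mem_Icc {γ : ℝ} (hγ : γ ∈ Set.Icc 0 1) {r : ℕ → ℝ}
    (hr : ∀ t, r t ∈ Set.Icc 0 1) (T : ℕ) :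
    ∑ t ∈ Icc 1 T, γ ^ (t - 1) * r t ∈ Set.Icc 0 (T : ℝ) := by
  have hterm : ∀ t, γ ^ (t - 1) * r t ∈ unitInterval := fun t =>
    unitInterval.mul_mem ⟨pow_nonneg hγ.1 _, pow_le_one₀ hγ.1 hγ.2⟩ (hr t)
  refine ⟨sum_nonneg fun t _ => (hterm t).1, ?_⟩
  simpa using sum_le_card_nsmul (Icc 1 T) _ 1 fun t _ => (hterm t).2

section Increments

variable {Ω : Type*} {m0 : MeasurableSpace Ω} {P : Measure Ω} {M : ℕ → Ω → ℝ} {d : ℝ}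

theorem ae_abs_le_mul_of_abs_sub_le (hM0 : ∀ᵐ ω ∂P, M 0 ω = 0) {n : ℕ}
    (hbdd : ∀ t < n, ∀ᵐ ω ∂P, |M (t + 1) ω - M t ω| ≤ d) : ∀ᵐ ω ∂P, |M n ω| ≤ n * d := by
  induction n with
  | zero => filter_upwards [hM0] with ω h; simp [h]
  | succ n ih =>
    filter_upwards [ih fun t ht => hbdd t (by omega), hbdd n n.lt_succ_self] with ω hn hstep
    have := abs_sub_abs_le_abs_sub (M (n + 1) ω) (M n ω)
    push_cast
    linarith

variable [IsProbabilityMeasure P] {ℱ : Filtration ℕ m0}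

namespace MeasureTheory.Martingale

theorem integral_mul_sub_eq_zero (hM : Martingale M ℱ P) {i j : ℕ} (hij : i ≤ j) {g : Ω → ℝ}
    (hg : StronglyMeasurable[ℱ i] g) (hgM : Integrable (fun ω => g ω * (M j ω - M i ω)) P) :
    ∫ ω, g ω * (M j ω - M i ω) ∂P = 0 := by
  have hcond : P[fun ω => M j ω - M i ω | ℱ i] =ᵐ[P] 0 := by
    filter_upwards [condExp_sub (hM.integrable j) (hM.integrable i) (ℱ i), hM.condExp_ae_eq hij]
      with ω hsub hj
    change P[M j - M i | ℱ i] ω = 0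
    simp [hsub, hj,
      condExp_of_stronglyMeasurable (ℱ.le i) (hM.stronglyAdapted i) (hM.integrable i)]
  have hpull := condExp_mul_of_stronglyMeasurable_left hg hgM
    ((hM.integrable j).sub (hM.integrable i))
  calc ∫ ω, g ω * (M j ω - M i ω) ∂P = ∫ ω, P[g * fun ω => M j ω - M i ω | ℱ i] ω ∂P :=
        (integral_condExp (ℱ.le i)).symm
    _ = 0 := by
        refine integral_eq_zero_of_ae ?_
        filter_upwards [hpull, hcond] with ω h1 h2
        rw [h1, Pi.mul_apply, h2, Pi.zero_apply, mul_zero]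

theorem integrable_exp_mul (hM : Martingale M ℱ P) (hM0 : ∀ᵐ ω ∂P, M 0 ω = 0) {n : ℕ}
    (hbdd : ∀ t < n, ∀ᵐ ω ∂P, |M (t + 1) ω - M t ω| ≤ d) (l : ℝ) :
    Integrable (fun ω => exp (l * M n ω)) P := by
  refine integrable_exp_mul_of_mem_Icc (a := -(n * d)) (b := n * d)
    (hM.integrable n).aemeasurable ?_
  filter_upwards [ae_abs_le_mul_of_abs_sub_le hM0 hbdd] with ω h
  exact abs_le.mp h

theorem integral_exp_mul_succ_le (hM : Martingale M ℱ P) {k : ℕ} (l : ℝ)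
    (hstep : ∀ᵐ ω ∂P, |M (k + 1) ω - M k ω| ≤ d)
    (hk : Integrable (fun ω => exp (l * M k ω)) P)
    (hk' : Integrable (fun ω => exp (l * M (k + 1) ω)) P) :
    ∫ ω, exp (l * M (k + 1) ω) ∂P ≤ cosh (l * d) * ∫ ω, exp (l * M k ω) ∂P := by
  have hgΔ : Integrable (fun ω => exp (l * M k ω) * (M (k + 1) ω - M k ω)) P :=
    hk.mul_bdd ((hM.integrable _).sub (hM.integrable _)).aestronglyMeasurable hstep
  have hg : StronglyMeasurable[ℱ k] fun ω => exp (l * M k ω) :=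
    (continuous_exp.comp (continuous_const_mul l)).comp_stronglyMeasurable (hM.stronglyAdapted k)
  have hpt : ∀ᵐ ω ∂P, exp (l * M (k + 1) ω) ≤ cosh (l * d) * exp (l * M k ω)
      + sinh (l * d) / d * (exp (l * M k ω) * (M (k + 1) ω - M k ω)) := by
    filter_upwards [hstep] with ω h
    calc exp (l * M (k + 1) ω) = exp (l * M k ω) * exp (l * (M (k + 1) ω - M k ω)) := by
          rw [← exp_add]; ring_nf
      _ ≤ exp (l * M k ω) * (cosh (l * d) + (M (k + 1) ω - M k ω) / d * sinh (l * d)) :=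
          mul_le_mul_of_nonneg_left (exp_mul_le_cosh_add_div_mul_sinh h) (exp_nonneg _)
      _ = _ := by ring
  calc ∫ ω, exp (l * M (k + 1) ω) ∂P
      ≤ ∫ ω, cosh (l * d) * exp (l * M k ω)
          + sinh (l * d) / d * (exp (l * M k ω) * (M (k + 1) ω - M k ω)) ∂P :=
        integral_mono_ae hk' ((hk.const_mul _).add (hgΔ.const_mul _)) hpt
    _ = cosh (l * d) * ∫ ω, exp (l * M k ω) ∂P := by
        rw [integral_add (hk.const_mul _) (hgΔ.const_mul _), integral_const_mul,
          integral_const_mul, hM.integral_mul_sub_eq_zero k.le_succ hg hgΔ, mul_zero, add_zero]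

theorem mgf_le_cosh_pow (hM : Martingale M ℱ P) (hM0 : ∀ᵐ ω ∂P, M 0 ω = 0) {n : ℕ}
    (hbdd : ∀ t < n, ∀ᵐ ω ∂P, |M (t + 1) ω - M t ω| ≤ d) (l : ℝ) :
    mgf (M n) P l ≤ cosh (l * d) ^ n := by
  induction n with
  | zero =>
    have hone : (fun ω => exp (l * M 0 ω)) =ᵐ[P] fun _ => 1 := hM0.mono fun ω h => by simp [h]
    simp [mgf, integral_congr_ae hone]
  | succ n ih =>
    have hbdd' : ∀ t < n, ∀ᵐ ω ∂P, |M (t + 1) ω - M t ω| ≤ d := fun t ht => hbdd t (by omega)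
    calc mgf (M (n + 1)) P l ≤ cosh (l * d) * mgf (M n) P l :=
          hM.integral_exp_mul_succ_le l (hbdd n n.lt_succ_self)
            (hM.integrable_exp_mul hM0 hbdd' l) (hM.integrable_exp_mul hM0 hbdd l)
      _ ≤ cosh (l * d) * cosh (l * d) ^ n := by gcongr; exact ih hbdd'
      _ = cosh (l * d) ^ (n + 1) := by ring

theorem hasSubgaussianMGF_of_abs_sub_le (hM : Martingale M ℱ P) (hM0 : ∀ᵐ ω ∂P, M 0 ω = 0)
    {n : ℕ} (hbdd : ∀ t < n, ∀ᵐ ω ∂P, |M (t + 1) ω - M t ω| ≤ d) :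
    HasSubgaussianMGF (M n) (n * d ^ 2).toNNReal P where
  integrable_exp_mul := hM.integrable_exp_mul hM0 hbdd
  mgf_le l := by
    calc mgf (M n) P l ≤ cosh (l * d) ^ n := hM.mgf_le_cosh_pow hM0 hbdd l
      _ ≤ exp ((l * d) ^ 2 / 2) ^ n := by gcongr; exact cosh_le_exp_half_sq _
      _ = _ := by rw [Real.coe_toNNReal _ (by positivity), ← exp_nat_mul]; ring_nf

theorem measureReal_ge_le_of_abs_sub_le (hM : Martingale M ℱ P) (hM0 : ∀ᵐ ω ∂P, M 0 ω = 0)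
    {n : ℕ} (hbdd : ∀ t < n, ∀ᵐ ω ∂P, |M (t + 1) ω - M t ω| ≤ d) {ε : ℝ} (hε : 0 ≤ ε) :
    P.real {ω | ε ≤ M n ω} ≤ exp (-ε ^ 2 / (2 * (n * d ^ 2))) := by
  have h := (hM.hasSubgaussianMGF_of_abs_sub_le hM0 hbdd).measure_ge_le hε
  rwa [Real.coe_toNNReal _ (by positivity)] at h

end MeasureTheory.Martingale

end Increments

theorem is_variance_exponential_lower_bound_general
    {Ω : Type*} {m0 : MeasurableSpace Ω} (P : Measure Ω) [IsProbabilityMeasure P]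
    (T : ℕ) (ℱ : MeasureTheory.Filtration ℕ m0)
    (γ : ℝ) (hγ : γ ∈ Set.Ioc (0 : ℝ) 1)
    (ρ : ℕ → Ω → ℝ)
    (hρ_nonneg : ∀ t ω, 0 ≤ ρ t ω)
    (ρprod : ℕ → Ω → ℝ)
    (hρprod : ∀ t ω, ρprod t ω = ∏ k ∈ Icc 1 t, ρ k ω)
    (r : ℕ → Ω → ℝ)
    (hr_range : ∀ t ω, r t ω ∈ Set.Icc (0 : ℝ) 1)
    (Y : Ω → ℝ)
    (hY : ∀ ω, Y ω = ρprod T ω * ∑ t ∈ Icc 1 T, γ ^ (t - 1) * r t ω)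
    (hY_sq : MemLp Y 2 P)
    (v : ℝ) (hv : v = ∫ ω, Y ω ∂P) (hv_pos : 0 < v)
    (c d F : ℝ) (hc_pos : 0 < c)
    (M : ℕ → Ω → ℝ) (hM : Martingale M ℱ P) (hM0 : ∀ ω, M 0 ω = 0)
    (hM_bdd : ∀ t, 1 ≤ t → t ≤ T → ∀ᵐ ω ∂P, |M t ω - M (t - 1) ω| ≤ d)
    (D : Ω → ℝ) (hD_bdd : ∀ᵐ ω ∂P, |D ω| ≤ 2 * F)
    (h_decomp : ∀ᵐ ω ∂P, Real.log (ρprod T ω) = -(T : ℝ) * c + D ω + M T ω)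
    (hT : (T : ℝ) * c / 2 ≥ 2 * F + Real.log (2 * T) - Real.log v) :
    (∫ ω, (Y ω) ^ 2 ∂P) - v ^ 2
      ≥ v ^ 2 / 4 * Real.exp ((T : ℝ) * c ^ 2 / (8 * d ^ 2)) - v ^ 2 := by
  have hT1 : 1 ≤ T := by
    by_contra! h
    obtain rfl : T = 0 := by omega
    simp [hv, hY] at hv_pos
  have hTpos : (0 : ℝ) < T := by exact_mod_cast hT1
  set S := {ω | (T : ℝ) * c / 2 ≤ M T ω}
  have hS : MeasurableSet S :=
    measurableSet_le measurable_const ((hM.stronglyAdapted T).mono (ℱ.le T)).measurable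
  have hY_off : ∀ᵐ ω ∂P, ω ∉ S → Y ω ≤ v / 2 := by
    filter_upwards [hD_bdd, h_decomp] with ω hD hdec hω
    rw [hY ω]
    refine mul_le_half_of_log_le ((hρprod T ω).symm ▸ prod_nonneg fun k _ => hρ_nonneg k ω)
      (sum_pow_mul_mem_Icc (Set.Ioc_subset_Icc_self hγ) (fun t => hr_range t ω) T) hv_pos hTpos ?_
    have hlt : M T ω < T * c / 2 := lt_of_not_ge hω
    rw [hdec]
    linarith [(abs_le.mp hD).2]
  have hhalf : v / 2 ≤ ∫ ω in S, Y ω ∂P := by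
    have := integral_le_add_setIntegral_of_ae_notMem_le hS (hY_sq.integrable one_le_two)
      (by positivity) hY_off
    linarith
  have hS_le : P.real S ≤ exp (-((T : ℝ) * c ^ 2 / (8 * d ^ 2))) := by
    have hbdd : ∀ t < T, ∀ᵐ ω ∂P, |M (t + 1) ω - M t ω| ≤ d := fun t ht => by
      simpa using hM_bdd (t + 1) (by omega) (by omega)
    refine (hM.measureReal_ge_le_of_abs_sub_le (ae_of_all _ hM0) hbdd (by positivity)).trans_eq ?_
    congr 1
    field_simp
    ring
  have hE : v ^ 2 / 4 * exp ((T : ℝ) * c ^ 2 / (8 * d ^ 2)) ≤ ∫ ω, Y ω ^ 2 ∂P := by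
    rw [← le_div_iff₀ (exp_pos _), div_eq_mul_inv (∫ ω, Y ω ^ 2 ∂P), ← exp_neg]
    calc v ^ 2 / 4 ≤ (∫ ω in S, Y ω ∂P) ^ 2 := by nlinarith
      _ ≤ P.real S * ∫ ω, Y ω ^ 2 ∂P :=
          sq_setIntegral_le_measureReal_mul_integral_sq hY_sq hS (measure_ne_top P S)
      _ ≤ _ := by rw [mul_comm]; gcongr
  linarith

/-- In the likelihood-ratio filtration setup, let
`Y := ρ_{1:T} ∑_t γ^{t−1} r_t` with `v := E[Y] > 0` and `Y` square-integrable. If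
`log ρ_{1:T} = −Tc + D + M_T` for a martingale `M` with `M_0 = 0` and increments
bounded by `d`, and `|D| ≤ 2F` a.s., and `Tc/2 ≥ 2F + log(2T) − log v`, then
`Var(Y) ≥ (v²/4) exp(Tc²/(8d²)) − v²`, with `Var(X) := E[X²] − (E[X])²`. -/
theorem is_variance_exponential_lower_bound
    {Ω : Type*} {m0 : MeasurableSpace Ω} (P : Measure Ω) [IsProbabilityMeasure P]
    (T : ℕ) (ℱ : MeasureTheory.Filtration ℕ m0)
    (γ : ℝ) (hγ : γ ∈ Set.Ioc (0 : ℝ) 1)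
    (ρ : ℕ → Ω → ℝ)
    (hρ_meas : ∀ t, 1 ≤ t → t ≤ T → Measurable[ℱ t] (ρ t))
    (hρ_nonneg : ∀ t ω, 0 ≤ ρ t ω)
    (hρ_int : ∀ t, 1 ≤ t → t ≤ T → Integrable (ρ t) P)
    (hρ_cond : ∀ t, 1 ≤ t → t ≤ T → P[ρ t | ℱ (t - 1)] =ᵐ[P] fun _ => (1 : ℝ))
    (ρprod : ℕ → Ω → ℝ)
    (hρprod : ∀ t ω, ρprod t ω = ∏ k ∈ Icc 1 t, ρ k ω)
    (r : ℕ → Ω → ℝ)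
    (hr_meas : ∀ t, 1 ≤ t → t ≤ T → Measurable[ℱ t] (r t))
    (hr_range : ∀ t ω, r t ω ∈ Set.Icc (0 : ℝ) 1)
    (hρprod_sq : ∀ t, 1 ≤ t → t ≤ T → MemLp (ρprod t) 2 P)
    (Y : Ω → ℝ)
    (hY : ∀ ω, Y ω = ρprod T ω * ∑ t ∈ Icc 1 T, γ ^ (t - 1) * r t ω)
    (hY_sq : MemLp Y 2 P)
    (v : ℝ) (hv : v = ∫ ω, Y ω ∂P) (hv_pos : 0 < v)
    (c d F : ℝ) (hc_pos : 0 < c) (hd_pos : 0 < d) (hF_nonneg : 0 ≤ F)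
    (M : ℕ → Ω → ℝ) (hM : Martingale M ℱ P) (hM0 : ∀ ω, M 0 ω = 0)
    (hM_bdd : ∀ t, 1 ≤ t → t ≤ T → ∀ᵐ ω ∂P, |M t ω - M (t - 1) ω| ≤ d)
    (D : Ω → ℝ) (hD_bdd : ∀ᵐ ω ∂P, |D ω| ≤ 2 * F)
    (h_decomp : ∀ᵐ ω ∂P, Real.log (ρprod T ω) = -(T : ℝ) * c + D ω + M T ω)
    (hT : (T : ℝ) * c / 2 ≥ 2 * F + Real.log (2 * T) - Real.log v) :
    (∫ ω, (Y ω) ^ 2 ∂P) - v ^ 2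
      ≥ v ^ 2 / 4 * Real.exp ((T : ℝ) * c ^ 2 / (8 * d ^ 2)) - v ^ 2 :=
  is_variance_exponential_lower_bound_general P T ℱ γ hγ ρ hρ_nonneg ρprod hρprod r hr_range Y hY
    hY_sq v hv hv_pos c d F hc_pos M hM hM0 hM_bdd D hD_bdd h_decomp hT
end

section
/- Let (Ω, ℱ, P) be a probability space, T ∈ ℕ, γ ∈ (0,1], let w_1, …, w_T and w̃_1, …, w̃_T be nonnegative square-integrable random variables with E[(w_t − w̃_t)²] ≤ ε_w for all t and some ε_w ≥ 0, and let r_1, …, r_T : Ω → [0,1] be random variables. Set V := ∑_{t=1}^T γ^{t−1} w̃_t r_t, v := E[V], and V̂ := ∑_{t=1}^T γ^{t−1} w_t r_t. Then the mean squared error of V̂ satisfies E[(V̂ − v)²] ≤ 2 Var(V) + 2 T² ε_w. -/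
/-!
Split `V̂ - v = (V̂ - V) + (V - v)` and use `(a + b)² ≤ 2a² + 2b²`. The second part integrates
to the variance of `V`. For the first, `V̂ - V = ∑ₜ cₜ (wₜ - w̃ₜ)` with coefficients
`cₜ = γ^{t-1} rₜ ∈ [0, 1]`, so Cauchy–Schwarz bounds its square by `T ∑ₜ (wₜ - w̃ₜ)²`,
whose expectation is at most `T² ε_w`.
-/

open MeasureTheory ProbabilityTheory Finset

theorem sq_sum_mul_le_card_mul_sum_sq {ι : Type*} (s : Finset ι) (c x : ι → ℝ)
    (hc : ∀ i, |c i| ≤ 1) : (∑ i ∈ s, c i * x i) ^ 2 ≤ #s * ∑ i ∈ s, x i ^ 2 := by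
  calc (∑ i ∈ s, c i * x i) ^ 2 ≤ #s * ∑ i ∈ s, (c i * x i) ^ 2 := sq_sum_le_card_mul_sum_sq
    _ ≤ #s * ∑ i ∈ s, x i ^ 2 := by
      refine mul_le_mul_of_nonneg_left (sum_le_sum fun i _ => ?_) (Nat.cast_nonneg _)
      rw [mul_pow, ← sq_abs (c i)]
      exact mul_le_of_le_one_left (sq_nonneg _) (pow_le_one₀ (abs_nonneg _) (hc i))

section

variable {Ω ι : Type*} [MeasurableSpace Ω] {μ : Measure Ω} {c x : ι → Ω → ℝ}

theorem memLp_sum_mul_of_abs_le_one {p : ENNReal} (s : Finset ι)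
    (hc_meas : ∀ i, AEStronglyMeasurable (c i) μ) (hc : ∀ i ω, |c i ω| ≤ 1)
    (hx : ∀ i, MemLp (x i) p μ) : MemLp (fun ω => ∑ i ∈ s, c i ω * x i ω) p μ := by
  refine memLp_finsetSum s fun i _ => ?_
  refine (hx i).of_le ((hc_meas i).mul (hx i).aestronglyMeasurable) (ae_of_all _ fun ω => ?_)
  simp only [Real.norm_eq_abs, abs_mul]
  exact mul_le_of_le_one_left (abs_nonneg _) (hc i ω)

theorem integral_sq_sum_mul_le [IsFiniteMeasure μ] (s : Finset ι) {ε : ℝ}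
    (hc_meas : ∀ i, AEStronglyMeasurable (c i) μ) (hc : ∀ i ω, |c i ω| ≤ 1)
    (hx : ∀ i, MemLp (x i) 2 μ) (hε : ∀ i, ∫ ω, x i ω ^ 2 ∂μ ≤ ε) :
    ∫ ω, (∑ i ∈ s, c i ω * x i ω) ^ 2 ∂μ ≤ #s ^ 2 * ε := by
  have hx_sq (i : ι) : Integrable (fun ω => x i ω ^ 2) μ := (hx i).integrable_sq
  calc ∫ ω, (∑ i ∈ s, c i ω * x i ω) ^ 2 ∂μ ≤ ∫ ω, (#s * ∑ i ∈ s, x i ω ^ 2 : ℝ) ∂μ :=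
        integral_mono (memLp_sum_mul_of_abs_le_one s hc_meas hc hx).integrable_sq
          ((integrable_finsetSum s fun i _ => hx_sq i).const_mul _)
          fun ω => sq_sum_mul_le_card_mul_sum_sq s (c · ω) (x · ω) (hc · ω)
    _ = #s * ∑ i ∈ s, ∫ ω, x i ω ^ 2 ∂μ := by
        rw [integral_const_mul, integral_finsetSum s fun i _ => hx_sq i]
    _ ≤ #s * (#s * ε) := by
        gcongr
        simpa using sum_le_card_nsmul s _ ε fun i _ => hε i
    _ = #s ^ 2 * ε := by ring

theorem integral_sq_sub_const_le [IsFiniteMeasure μ] {f g : Ω → ℝ} (hf : MemLp f 2 μ)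
    (hg : MemLp g 2 μ) (a : ℝ) :
    ∫ ω, (f ω - a) ^ 2 ∂μ ≤ 2 * ∫ ω, (f ω - g ω) ^ 2 ∂μ + 2 * ∫ ω, (g ω - a) ^ 2 ∂μ := by
  have hfg : Integrable (fun ω => (f ω - g ω) ^ 2) μ := (hf.sub hg).integrable_sq
  have hga : Integrable (fun ω => (g ω - a) ^ 2) μ := (hg.sub (memLp_const a)).integrable_sq
  rw [← integral_const_mul, ← integral_const_mul,
    ← integral_add (hfg.const_mul 2) (hga.const_mul 2)]
  exact integral_mono (hf.sub (memLp_const a)).integrable_sq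
    ((hfg.const_mul 2).add (hga.const_mul 2))
    fun ω => by nlinarith [sq_nonneg (f ω - g ω - (g ω - a))]

end

theorem approximate_sis_mse_bound_general
    {Ω : Type*} {m0 : MeasurableSpace Ω} (P : Measure Ω) [IsProbabilityMeasure P]
    (T : ℕ) (γ : ℝ) (hγ : γ ∈ Set.Ioc (0 : ℝ) 1)
    (w w' : ℕ → Ω → ℝ)
    (hw_sq : ∀ t, MemLp (w t) 2 P) (hw'_sq : ∀ t, MemLp (w' t) 2 P)
    (εw : ℝ)
    (h_err : ∀ t, (∫ ω, (w t ω - w' t ω) ^ 2 ∂P) ≤ εw)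
    (r : ℕ → Ω → ℝ)
    (hr_meas : ∀ t, Measurable (r t))
    (hr_range : ∀ t ω, r t ω ∈ Set.Icc (0 : ℝ) 1)
    (V Vhat : Ω → ℝ) (v : ℝ)
    (hV : ∀ ω, V ω = ∑ t ∈ Icc 1 T, γ ^ (t - 1) * w' t ω * r t ω)
    (hv : v = ∫ ω, V ω ∂P)
    (hVhat : ∀ ω, Vhat ω = ∑ t ∈ Icc 1 T, γ ^ (t - 1) * w t ω * r t ω) :
    (∫ ω, (Vhat ω - v) ^ 2 ∂P)
      ≤ 2 * ((∫ ω, (V ω) ^ 2 ∂P) - (∫ ω, V ω ∂P) ^ 2) + 2 * T ^ 2 * εw := by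
  set c : ℕ → Ω → ℝ := fun t ω => γ ^ (t - 1) * r t ω
  have hc (t : ℕ) (ω : Ω) : |c t ω| ≤ 1 := by
    obtain ⟨hr0, hr1⟩ := hr_range t ω
    rw [abs_of_nonneg (by have := hγ.1; positivity)]
    exact mul_le_one₀ (pow_le_one₀ hγ.1.le hγ.2) hr0 hr1
  have hc_meas (t : ℕ) : AEStronglyMeasurable (c t) P :=
    (measurable_const.mul (hr_meas t)).aestronglyMeasurable
  have hV_eq : V = fun ω => ∑ t ∈ Icc 1 T, c t ω * w' t ω :=
    funext fun ω => (hV ω).trans (sum_congr rfl fun t _ => by ring)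
  have hVhat_eq : Vhat = fun ω => ∑ t ∈ Icc 1 T, c t ω * w t ω :=
    funext fun ω => (hVhat ω).trans (sum_congr rfl fun t _ => by ring)
  have hV_mem : MemLp V 2 P := hV_eq ▸ memLp_sum_mul_of_abs_le_one _ hc_meas hc hw'_sq
  have hVhat_mem : MemLp Vhat 2 P := hVhat_eq ▸ memLp_sum_mul_of_abs_le_one _ hc_meas hc hw_sq
  have h_approx : ∫ ω, (Vhat ω - V ω) ^ 2 ∂P ≤ T ^ 2 * εw := by
    have h := integral_sq_sum_mul_le (Icc 1 T) hc_meas hc (fun t => (hw_sq t).sub (hw'_sq t)) h_err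
    simpa [hV_eq, hVhat_eq, ← sum_sub_distrib, mul_sub] using h
  have h_var : ∫ ω, (V ω - v) ^ 2 ∂P = ∫ ω, V ω ^ 2 ∂P - (∫ ω, V ω ∂P) ^ 2 := by
    rw [hv, ← variance_eq_integral hV_mem.aemeasurable, variance_eq_sub hV_mem]
    rfl
  calc ∫ ω, (Vhat ω - v) ^ 2 ∂P
      ≤ 2 * ∫ ω, (Vhat ω - V ω) ^ 2 ∂P + 2 * ∫ ω, (V ω - v) ^ 2 ∂P :=
        integral_sq_sub_const_le hVhat_mem hV_mem v
    _ ≤ 2 * ((∫ ω, V ω ^ 2 ∂P) - (∫ ω, V ω ∂P) ^ 2) + 2 * T ^ 2 * εw := by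
        rw [h_var]; linarith

/-- MSE bound for approximate stationary importance sampling. With exact
weights `w̃_t` and approximate weights `w_t` satisfying `E[(w_t − w̃_t)²] ≤ ε_w`, setting
`V := ∑ γ^{t−1} w̃_t r_t`, `v := E[V]`, `V̂ := ∑ γ^{t−1} w_t r_t`, we have
`E[(V̂ − v)²] ≤ 2 Var(V) + 2 T² ε_w`, where `Var(X) := E[X²] − (E[X])²`. -/
theorem approximate_sis_mse_bound
    {Ω : Type*} {m0 : MeasurableSpace Ω} (P : Measure Ω) [IsProbabilityMeasure P]
    (T : ℕ) (γ : ℝ) (hγ : γ ∈ Set.Ioc (0 : ℝ) 1)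
    (w w' : ℕ → Ω → ℝ)
    (hw_nonneg : ∀ t ω, 0 ≤ w t ω) (hw'_nonneg : ∀ t ω, 0 ≤ w' t ω)
    (hw_meas : ∀ t, Measurable (w t)) (hw'_meas : ∀ t, Measurable (w' t))
    (hw_sq : ∀ t, MemLp (w t) 2 P) (hw'_sq : ∀ t, MemLp (w' t) 2 P)
    (εw : ℝ) (hεw : 0 ≤ εw)
    (h_err : ∀ t, (∫ ω, (w t ω - w' t ω) ^ 2 ∂P) ≤ εw)
    (r : ℕ → Ω → ℝ)
    (hr_meas : ∀ t, Measurable (r t))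
    (hr_range : ∀ t ω, r t ω ∈ Set.Icc (0 : ℝ) 1)
    (V Vhat : Ω → ℝ) (v : ℝ)
    (hV : ∀ ω, V ω = ∑ t ∈ Icc 1 T, γ ^ (t - 1) * w' t ω * r t ω)
    (hv : v = ∫ ω, V ω ∂P)
    (hVhat : ∀ ω, Vhat ω = ∑ t ∈ Icc 1 T, γ ^ (t - 1) * w t ω * r t ω) :
    (∫ ω, (Vhat ω - v) ^ 2 ∂P)
      ≤ 2 * ((∫ ω, (V ω) ^ 2 ∂P) - (∫ ω, V ω ∂P) ^ 2) + 2 * T ^ 2 * εw :=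
  approximate_sis_mse_bound_general (m0 := m0) P T γ hγ w w' hw_sq hw'_sq εw h_err r hr_meas
    hr_range V Vhat v hV hv hVhat
end
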